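/- arXiv:2202.07971 — 4 statements merged into one kernel-verified Lean document; each statement's English description precedes it below -/
import Mathlib

section
/- Lemma (iterative lower bound propagation across phases). Fix 2 ≤ m ≤ M and suppose Δ ≤ C. Under any policy in the model, if L′ ∈ [0,1] and ε ≥ 0 satisfy ℙ(S_{1,m−1} < L′) ≤ ε, then, setting L = (v_m/v_{m−1})·L′ − (5·v_m/C)·Δ, we have ℙ(S_{1,m} < L) ≤ e^(−v_m²·(log N)²/C²) + (C/(v_m·Δ) + 1)·ε. -/
open Finset
open scoped Classical

noncomputable section

/-- `coxV μ p m` is the mean time `v_m` spent in phase `m` of a Coxian distribution. -/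
def coxV (μ p : ℕ → ℝ) (m : ℕ) : ℝ := (∏ i ∈ Finset.Icc 1 (m - 1), p i) / μ m

/-- The constant `a_m = μ_m / (p_1 μ_1 + μ_m)`. -/
def coxA (μ p : ℕ → ℝ) (m : ℕ) : ℝ := μ m / (p 1 * μ 1 + μ m)

/-- The constant `b_m`. -/
def coxB (M : ℕ) (μ p : ℕ → ℝ) (m : ℕ) : ℝ :=
  (1 - coxA μ p m) * (1 + ∑ r ∈ Finset.Icc (m + 1) M, coxV μ p r / coxV μ p 1)
    - coxA μ p m * coxV μ p m / coxV μ p 1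

/-- The constant `ξ = ∑_{m=2}^M b_m ∏_{j=m+1}^M a_j`. -/
def coxXi (M : ℕ) (μ p : ℕ → ℝ) : ℝ :=
  ∑ m ∈ Finset.Icc 2 M, coxB M μ p m * ∏ j ∈ Finset.Icc (m + 1) M, coxA μ p j

/-- The constant `c_m`. -/
def coxC (M : ℕ) (μ p : ℕ → ℝ) (m : ℕ) : ℝ :=
  5 * (1 - coxA μ p m) * (∑ r ∈ Finset.Icc (m + 1) M, ((r : ℝ) - 1) * coxV μ p r)
    + 5 * coxA μ p m * (∑ r ∈ Finset.Icc 2 (m - 1), μ r * coxV μ p r / μ m)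
    + 5 * ((m : ℝ) - 2) * coxA μ p m * coxV μ p m + 5 - coxA μ p m

/-- The constant `C_M = ∑_{m=2}^M c_m ∏_{j=m+1}^M a_j`. -/
def coxCM (M : ℕ) (μ p : ℕ → ℝ) : ℝ :=
  ∑ m ∈ Finset.Icc 2 M, coxC M μ p m * ∏ j ∈ Finset.Icc (m + 1) M, coxA μ p j

/-- The arrival rate `λ = 1 - N^{-α}`. -/
def lamOf (N : ℕ) (α : ℝ) : ℝ := 1 - (N : ℝ) ^ (-α)

/-- The matrix `e_{i,m}` with `(i,m)` entry `1/N` and all other entries `0`. -/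
def eMat (N i m : ℕ) : ℕ → ℕ → ℝ := fun i' m' => if i' = i ∧ m' = m then (N : ℝ)⁻¹ else 0

/-- State update upon an arrival routed to a server with `i-1` jobs, in-service job in phase `m`. -/
def arrUpd (N i m : ℕ) (s : ℕ → ℕ → ℝ) : ℕ → ℕ → ℝ := s + eMat N i m

/-- State update upon a departure from a server with `i` jobs, in-service job in phase `m`. -/
def depUpd (N i m : ℕ) (s : ℕ → ℕ → ℝ) : ℕ → ℕ → ℝ :=
  s - (∑ j ∈ Finset.Icc 1 i, eMat N j m) + (∑ j ∈ Finset.Icc 1 (i - 1), eMat N j 1)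

/-- State update upon a phase transition `m → m+1` at a server with `i` jobs. -/
def phaUpd (N i m : ℕ) (s : ℕ → ℕ → ℝ) : ℕ → ℕ → ℝ :=
  s - (∑ j ∈ Finset.Icc 1 i, eMat N j m) + (∑ j ∈ Finset.Icc 1 i, eMat N j (m + 1))

/-- The transition rate of the load-balancing CTMC from state `s` to state `s'`. -/
def lbRate (N b M : ℕ) (lam : ℝ) (μ p : ℕ → ℝ) (A : ℕ → ℕ → (ℕ → ℕ → ℝ) → ℝ)
    (s s' : ℕ → ℕ → ℝ) : ℝ :=
  ∑ i ∈ Finset.Icc 1 b, ∑ m ∈ Finset.Icc 1 M,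
    ((if s' = arrUpd N i m s then lam * N * (A (i - 1) m s - A i m s) else 0)
      + (if s' = depUpd N i m s then (1 - p m) * μ m * N * (s i m - s (i + 1) m) else 0)
      + (if s' = phaUpd N i m s then p m * μ m * N * (s i m - s (i + 1) m) else 0))

/-- States in the state space `𝒮^{(N)}`, in canonical form (zero outside the relevant indices). -/
def canonState (N b M : ℕ) (s : ℕ → ℕ → ℝ) : Prop :=
  (∀ m ∈ Finset.Icc 1 M, s 1 m ≤ 1) ∧
  (∀ m ∈ Finset.Icc 1 M, 0 ≤ s b m) ∧
  (∀ m ∈ Finset.Icc 1 M, ∀ i, 1 ≤ i → i < b → s (i + 1) m ≤ s i m) ∧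
  (∑ m ∈ Finset.Icc 1 M, s 1 m ≤ 1) ∧
  (∀ m ∈ Finset.Icc 1 M, ∀ i ∈ Finset.Icc 1 b, ∃ n : ℕ, s i m = (n : ℝ) / N) ∧
  (∀ i m : ℕ, i ∉ Finset.Icc 1 b ∨ m ∉ Finset.Icc 1 M → s i m = 0)

/-- A many-server load-balancing system with Coxian-`M` service times in the
sub-Halfin-Whitt regime, together with a load balancing policy `A`, its finite state
space `SS`, and the stationary distribution `pi` of the induced CTMC. -/
structure LBModel where
  N : ℕ
  M : ℕ
  b : ℕ
  α : ℝ
  μ : ℕ → ℝ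
  p : ℕ → ℝ
  A : ℕ → ℕ → (ℕ → ℕ → ℝ) → ℝ
  SS : Finset (ℕ → ℕ → ℝ)
  pi : (ℕ → ℕ → ℝ) → ℝ
  hN : 2 ≤ N
  hM : 1 ≤ M
  hb : 1 ≤ b
  hα0 : 0 < α
  hα1 : α < 1 / 2
  hμ : ∀ m ∈ Finset.Icc 1 M, 0 < μ m
  hp0 : ∀ m ∈ Finset.Icc 1 M, 0 ≤ p m
  hp1 : ∀ m ∈ Finset.Icc 1 (M - 1), p m < 1
  hpM : p M = 0
  hnorm : ∑ m ∈ Finset.Icc 1 M, coxV μ p m = 1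
  hSS : ∀ s, s ∈ SS ↔ canonState N b M s
  hA01 : ∀ s ∈ SS, ∀ i ∈ Finset.Icc 0 b, ∀ m ∈ Finset.Icc 1 M, 0 ≤ A i m s ∧ A i m s ≤ 1
  hAmono : ∀ s ∈ SS, ∀ m ∈ Finset.Icc 1 M, ∀ i < b, A (i + 1) m s ≤ A i m s
  hAsum : ∀ s ∈ SS, ∑ m ∈ Finset.Icc 1 M, A 0 m s = 1
  hAidle : ∀ s ∈ SS, ∀ m ∈ Finset.Icc 2 M, A 0 m s = A 1 m s
  hirr : ∀ s ∈ SS, ∀ s' ∈ SS,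
    Relation.ReflTransGen
      (fun x y => x ∈ SS ∧ y ∈ SS ∧ x ≠ y ∧ 0 < lbRate N b M (lamOf N α) μ p A x y) s s'
  hpi0 : ∀ s ∈ SS, 0 ≤ pi s
  hpi1 : ∑ s ∈ SS, pi s = 1
  hstat : ∀ s' ∈ SS,
    ∑ s ∈ SS.erase s', pi s * lbRate N b M (lamOf N α) μ p A s s'
      = pi s' * ∑ s'' ∈ SS.erase s', lbRate N b M (lamOf N α) μ p A s' s''
  hxi0 : 0 < coxXi M μ p
  hxi1 : coxXi M μ p < 1

namespace LBModel

variable (ℳ : LBModel)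

/-- The normalized arrival rate `λ = 1 - N^{-α}`. -/
def lam : ℝ := lamOf ℳ.N ℳ.α

/-- `Δ = (log N)/√N`. -/
def Del : ℝ := Real.log ℳ.N / Real.sqrt ℳ.N

/-- Steady-state probability of an event `E`. -/
def prob (E : (ℕ → ℕ → ℝ) → Prop) : ℝ := ∑ s ∈ ℳ.SS, if E s then ℳ.pi s else 0

/-- Steady-state expectation of a function `f` of the state. -/
def expect (f : (ℕ → ℕ → ℝ) → ℝ) : ℝ := ∑ s ∈ ℳ.SS, ℳ.pi s * f s

/-- `A_i(s) = ∑_m A_{i,m}(s)`: probability that an arrival is routed to a server with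
at least `i` jobs. -/
def Arow (i : ℕ) (s : ℕ → ℕ → ℝ) : ℝ := ∑ m ∈ Finset.Icc 1 ℳ.M, ℳ.A i m s

/-- The LB-zero (class `Π`) property. -/
def LBZero : Prop :=
  ∀ s ∈ ℳ.SS, (∑ m ∈ Finset.Icc 1 ℳ.M, s 1 m) ≤ 1 - 1 / ((ℳ.N : ℝ) ^ ℳ.α * Real.log ℳ.N) →
    ℳ.Arow 1 s ≤ 1 / Real.sqrt ℳ.N

/-- The zero-waiting equilibrium `s*_{1,m} = λ v_m`. -/
def sstar (m : ℕ) : ℝ := ℳ.lam * coxV ℳ.μ ℳ.p m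

/-- `ξ`. -/
def xi : ℝ := coxXi ℳ.M ℳ.μ ℳ.p

/-- `C_M`. -/
def CMc : ℝ := coxCM ℳ.M ℳ.μ ℳ.p

/-- `v̄ = min_m v_m`. -/
def vbar : ℝ := (Finset.Icc 1 ℳ.M).inf' (Finset.nonempty_Icc.mpr ℳ.hM) (coxV ℳ.μ ℳ.p)

/-- The constant `C`. -/
def Cc : ℝ :=
  Real.sqrt (2 * ℳ.vbar ^ 2 * Real.log (1 / ℳ.xi)
    / (3 * ℳ.M + (3 * ℳ.M + 4) * Real.log (1 / ℳ.xi)))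

/-- `θ_m = (6 μ_1 v_m + 5(m-1) v_m)/C`. -/
def θc (m : ℕ) : ℝ :=
  (6 * ℳ.μ 1 * coxV ℳ.μ ℳ.p m + 5 * ((m : ℝ) - 1) * coxV ℳ.μ ℳ.p m) / ℳ.Cc

/-- `w_m = (1 - p_m) μ_m`. -/
def wFun (m : ℕ) : ℝ := (1 - ℳ.p m) * ℳ.μ m

/-- `w_u = max_m w_m`. -/
def wu : ℝ := (Finset.Icc 1 ℳ.M).sup' (Finset.nonempty_Icc.mpr ℳ.hM) ℳ.wFun

/-- `w_l = min_m w_m`. -/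
def wl : ℝ := (Finset.Icc 1 ℳ.M).inf' (Finset.nonempty_Icc.mpr ℳ.hM) ℳ.wFun

/-- `μ_max = max_m μ_m`. -/
def μmax : ℝ := (Finset.Icc 1 ℳ.M).sup' (Finset.nonempty_Icc.mpr ℳ.hM) ℳ.μ

/-- The constant `ζ`. -/
def ζc : ℝ :=
  4 * ℳ.wu * ℳ.b / ℳ.wl *
    ((1 / ℳ.wl - 1 / ℳ.wu) * (∑ m ∈ Finset.Icc 1 ℳ.M, ℳ.θc m * ℳ.wFun m) + 1 / ℳ.wl + 6)

/-- The constant `k`. -/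
def kc : ℝ :=
  (∑ m ∈ Finset.Icc 1 ℳ.M, ℳ.θc m * ℳ.wFun m) / ℳ.wu
    + (1 + ℳ.wl / (4 * ℳ.wu * ℳ.b)) * ℳ.ζc - ∑ m ∈ Finset.Icc 1 ℳ.M, ℳ.θc m

end LBModel

section AuxEval

lemma eMat_apply (N i m i' m' : ℕ) :
    eMat N i m i' m' = if i' = i ∧ m' = m then (N : ℝ)⁻¹ else 0 := rfl

lemma prefixSum_apply (N m i i' m' : ℕ) :
    (∑ j ∈ Finset.Icc 1 i, eMat N j m) i' m'
      = if i' ∈ Finset.Icc 1 i ∧ m' = m then (N : ℝ)⁻¹ else 0 := by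
  classical
  rw [Finset.sum_apply, Finset.sum_apply]
  simp only [eMat_apply]
  by_cases hm : m' = m
  · simp only [hm, and_true]
    rw [Finset.sum_ite_eq (Finset.Icc 1 i) i' (fun _ => (N:ℝ)⁻¹)]
  · simp [hm]

lemma arrUpd_apply (N i m : ℕ) (s : ℕ → ℕ → ℝ) (i' m' : ℕ) :
    arrUpd N i m s i' m' = s i' m' + (if i' = i ∧ m' = m then (N : ℝ)⁻¹ else 0) := rfl

lemma depUpd_apply (N i m : ℕ) (s : ℕ → ℕ → ℝ) (i' m' : ℕ) :
    depUpd N i m s i' m'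
      = s i' m' - (if i' ∈ Finset.Icc 1 i ∧ m' = m then (N : ℝ)⁻¹ else 0)
        + (if i' ∈ Finset.Icc 1 (i - 1) ∧ m' = 1 then (N : ℝ)⁻¹ else 0) := by
  show (s - _ + _) i' m' = _
  simp only [Pi.add_apply, Pi.sub_apply, prefixSum_apply]

lemma phaUpd_apply (N i m : ℕ) (s : ℕ → ℕ → ℝ) (i' m' : ℕ) :
    phaUpd N i m s i' m'
      = s i' m' - (if i' ∈ Finset.Icc 1 i ∧ m' = m then (N : ℝ)⁻¹ else 0)
        + (if i' ∈ Finset.Icc 1 i ∧ m' = m + 1 then (N : ℝ)⁻¹ else 0) := by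
  show (s - _ + _) i' m' = _
  simp only [Pi.add_apply, Pi.sub_apply, prefixSum_apply]

end AuxEval

section AuxCanon

variable {N b M : ℕ} {s : ℕ → ℕ → ℝ}

lemma canon_mono (hs : canonState N b M s) {m' : ℕ} (hm : m' ∈ Finset.Icc 1 M)
    {i i' : ℕ} (hi : 1 ≤ i) (hii : i ≤ i') (hib : i' ≤ b) : s i' m' ≤ s i m' := by
  induction i' with
  | zero => omega
  | succ k ih =>
    rcases Nat.eq_or_lt_of_le hii with h | h
    · rw [h]
    · have hk : i ≤ k := by omega
      have h1k : 1 ≤ k := by omega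
      have := hs.2.2.1 m' hm k h1k (by omega)
      have := ih hk (by omega)
      linarith

lemma canon_nonneg (hs : canonState N b M s) (i m' : ℕ) : 0 ≤ s i m' := by
  by_cases hin : i ∈ Finset.Icc 1 b ∧ m' ∈ Finset.Icc 1 M
  · obtain ⟨hi, hm⟩ := hin
    simp only [Finset.mem_Icc] at hi
    have h1 := canon_mono hs hm hi.1 hi.2 (le_refl b)
    have h2 := hs.2.1 m' hm
    linarith
  · rw [hs.2.2.2.2.2 i m' (by tauto)]

/-- extended monotonicity including `i' = b + 1` (where the state is 0). -/
lemma canon_mono' (hs : canonState N b M s) {m' : ℕ} (hm : m' ∈ Finset.Icc 1 M)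
    {i i' : ℕ} (hi : 1 ≤ i) (hii : i ≤ i') : s i' m' ≤ s i m' := by
  by_cases hib : i' ≤ b
  · exact canon_mono hs hm hi hii hib
  · rw [hs.2.2.2.2.2 i' m' (by left; simp only [Finset.mem_Icc]; omega)]
    exact canon_nonneg hs i m'

lemma canon_grid (hs : canonState N b M s) {m' : ℕ} (hm : m' ∈ Finset.Icc 1 M)
    (i : ℕ) (hi : 1 ≤ i) : ∃ n : ℕ, s i m' = (n : ℝ) / N := by
  by_cases hib : i ≤ b
  · exact hs.2.2.2.2.1 m' hm i (Finset.mem_Icc.mpr ⟨hi, hib⟩)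
  · exact ⟨0, by rw [hs.2.2.2.2.2 i m' (by left; simp only [Finset.mem_Icc]; omega)]; simp⟩

lemma grid_step {N : ℕ} (hN : 0 < N) {x y : ℝ} (hx : ∃ n : ℕ, x = (n:ℝ) / N)
    (hy : ∃ n : ℕ, y = (n:ℝ) / N) (h : y < x) : y + (N : ℝ)⁻¹ ≤ x := by
  obtain ⟨n, rfl⟩ := hx
  obtain ⟨n', rfl⟩ := hy
  have hN' : (0:ℝ) < N := by exact_mod_cast hN
  have hlt : n' < n := by
    by_contra hc
    push_neg at hc
    have : (n:ℝ)/N ≤ (n':ℝ)/N := by gcongr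
    linarith
  have : ((n' + 1 : ℕ) : ℝ) / N ≤ (n : ℝ) / N := by gcongr; exact_mod_cast hlt
  push_cast at this
  rw [add_div] at this
  rw [one_div] at this
  linarith

end AuxCanon

section AuxMem

variable {N b M : ℕ} {s : ℕ → ℕ → ℝ}

lemma pha_mem (hN : 0 < N) (hs : canonState N b M s) {i m' : ℕ}
    (hi1 : 1 ≤ i) (hib : i ≤ b) (hm1 : 1 ≤ m') (hmM : m' + 1 ≤ M)
    (hq : s (i+1) m' < s i m') : canonState N b M (phaUpd N i m' s) := by
  have hmIcc : m' ∈ Finset.Icc 1 M := Finset.mem_Icc.mpr ⟨hm1, by omega⟩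
  have hm1Icc : m' + 1 ∈ Finset.Icc 1 M := Finset.mem_Icc.mpr ⟨by omega, hmM⟩
  have hNR : (0:ℝ) < (N:ℝ) := by exact_mod_cast hN
  have hcpos : (0:ℝ) < (N:ℝ)⁻¹ := by positivity
  have hgap : s (i+1) m' + (N:ℝ)⁻¹ ≤ s i m' :=
    grid_step hN (canon_grid hs hmIcc i hi1) (canon_grid hs hmIcc (i+1) (by omega)) hq
  have hchain : ∀ j, 1 ≤ j → j ≤ i → (N:ℝ)⁻¹ ≤ s j m' := by
    intro j h1 h2
    have h4 := canon_mono hs hmIcc h1 h2 hib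
    have h5 := canon_nonneg hs (i+1) m'
    linarith
  have hrow : ∀ m'' ∈ Finset.Icc 1 M, 0 ≤ phaUpd N i m' s 1 m'' := by
    intro m'' hm''
    rw [phaUpd_apply]
    have hnn := canon_nonneg hs 1 m''
    split_ifs with h1 h2 h2
    · exfalso; omega
    · have := hchain 1 le_rfl hi1
      rw [h1.2]; linarith
    · linarith
    · linarith
  have hsum : ∑ m'' ∈ Finset.Icc 1 M, phaUpd N i m' s 1 m''
      = ∑ m'' ∈ Finset.Icc 1 M, s 1 m'' := by
    simp only [phaUpd_apply]
    rw [Finset.sum_add_distrib, Finset.sum_sub_distrib]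
    have h1i : (1:ℕ) ∈ Finset.Icc 1 i := Finset.mem_Icc.mpr ⟨le_rfl, hi1⟩
    have e1 : ∑ m'' ∈ Finset.Icc 1 M, (if (1:ℕ) ∈ Finset.Icc 1 i ∧ m'' = m'
        then (N:ℝ)⁻¹ else 0) = (N:ℝ)⁻¹ := by
      simp only [h1i, true_and]
      rw [Finset.sum_ite_eq' (Finset.Icc 1 M) m' (fun _ => (N:ℝ)⁻¹)]
      simp [hmIcc]
    have e2 : ∑ m'' ∈ Finset.Icc 1 M, (if (1:ℕ) ∈ Finset.Icc 1 i ∧ m'' = m' + 1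
        then (N:ℝ)⁻¹ else 0) = (N:ℝ)⁻¹ := by
      simp only [h1i, true_and]
      rw [Finset.sum_ite_eq' (Finset.Icc 1 M) (m'+1) (fun _ => (N:ℝ)⁻¹)]
      simp [hm1Icc]
    rw [e1, e2]; ring
  refine ⟨?_, ?_, ?_, ?_, ?_, ?_⟩
  · intro m'' hm''
    calc phaUpd N i m' s 1 m''
        ≤ ∑ m₂ ∈ Finset.Icc 1 M, phaUpd N i m' s 1 m₂ :=
          Finset.single_le_sum (fun x hx => hrow x hx) hm''
      _ = ∑ m₂ ∈ Finset.Icc 1 M, s 1 m₂ := hsum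
      _ ≤ 1 := hs.2.2.2.1
  · intro m'' hm''
    rw [phaUpd_apply]
    have hnn := canon_nonneg hs b m''
    split_ifs with h1 h2 h2
    · exfalso; omega
    · have := hchain b (le_trans hi1 hib) (Finset.mem_Icc.mp h1.1).2
      rw [h1.2]; linarith
    · linarith
    · linarith
  · intro m'' hm'' i'' h1 h2
    have hmono := hs.2.2.1 m'' hm'' i'' h1 h2
    rw [phaUpd_apply, phaUpd_apply]
    rcases eq_or_ne m'' m' with he | he
    · subst he
      have hne : ¬ (m'' = m'' + 1) := by omega
      simp only [Finset.mem_Icc, hne, and_false, if_false, and_true, add_zero]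
      split_ifs with ha hb hb
      · linarith
      · exfalso; omega
      · have : i'' = i := by omega
        subst this; linarith
      · linarith
    · rcases eq_or_ne m'' (m'+1) with he2 | he2
      · subst he2
        simp only [Finset.mem_Icc, he, and_false, if_false, and_true, sub_zero]
        split_ifs with ha hb hb <;> first | linarith | (exfalso; omega)
      · simp only [he, he2, and_false, if_false, sub_zero, add_zero]
        exact hmono
  · rw [hsum]; exact hs.2.2.2.1
  · intro m'' hm'' i'' hi''
    obtain ⟨hi''1, hi''b⟩ := Finset.mem_Icc.mp hi''
    obtain ⟨n, hn⟩ := hs.2.2.2.2.1 m'' hm'' i'' hi''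
    rw [phaUpd_apply]
    split_ifs with h1 h2 h2
    · exfalso; omega
    · have hii : i'' ≤ i := (Finset.mem_Icc.mp h1.1).2
      have hc : (N:ℝ)⁻¹ ≤ s i'' m'' := by rw [h1.2]; exact hchain i'' hi''1 hii
      have hn1 : 1 ≤ n := by
        by_contra h0
        have : n = 0 := by omega
        subst this
        simp only [Nat.cast_zero, zero_div] at hn
        rw [hn] at hc; linarith
      refine ⟨n - 1, ?_⟩
      rw [hn, Nat.cast_sub hn1]
      push_cast
      rw [add_zero, sub_div, one_div]
    · refine ⟨n + 1, ?_⟩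
      rw [hn]
      push_cast
      rw [sub_zero, add_div, one_div]
    · exact ⟨n, by rw [hn]; ring⟩
  · intro i'' m'' h
    have h0 := hs.2.2.2.2.2 i'' m'' h
    rw [phaUpd_apply, h0]
    have f1 : ¬(i'' ∈ Finset.Icc 1 i ∧ m'' = m') := by
      rintro ⟨ha, rfl⟩
      have ha' := Finset.mem_Icc.mp ha
      rcases h with h | h
      · exact h (Finset.mem_Icc.mpr ⟨ha'.1, le_trans ha'.2 hib⟩)
      · exact h hmIcc
    have f2 : ¬(i'' ∈ Finset.Icc 1 i ∧ m'' = m' + 1) := by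
      rintro ⟨ha, rfl⟩
      have ha' := Finset.mem_Icc.mp ha
      rcases h with h | h
      · exact h (Finset.mem_Icc.mpr ⟨ha'.1, le_trans ha'.2 hib⟩)
      · exact h hm1Icc
    rw [if_neg f1, if_neg f2]; ring

lemma dep_mem (hN : 0 < N) (hs : canonState N b M s) {i m' : ℕ}
    (hi1 : 1 ≤ i) (hib : i ≤ b) (hm2 : 2 ≤ m') (hmM : m' ≤ M)
    (hq : s (i+1) m' < s i m') : canonState N b M (depUpd N i m' s) := by
  have hmIcc : m' ∈ Finset.Icc 1 M := Finset.mem_Icc.mpr ⟨by omega, hmM⟩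
  have h1Icc : (1:ℕ) ∈ Finset.Icc 1 M := Finset.mem_Icc.mpr ⟨le_rfl, by omega⟩
  have hNR : (0:ℝ) < (N:ℝ) := by exact_mod_cast hN
  have hcpos : (0:ℝ) < (N:ℝ)⁻¹ := by positivity
  have hgap : s (i+1) m' + (N:ℝ)⁻¹ ≤ s i m' :=
    grid_step hN (canon_grid hs hmIcc i hi1) (canon_grid hs hmIcc (i+1) (by omega)) hq
  have hchain : ∀ j, 1 ≤ j → j ≤ i → (N:ℝ)⁻¹ ≤ s j m' := by
    intro j h1 h2
    have h4 := canon_mono hs hmIcc h1 h2 hib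
    have h5 := canon_nonneg hs (i+1) m'
    linarith
  have hrow : ∀ m'' ∈ Finset.Icc 1 M, 0 ≤ depUpd N i m' s 1 m'' := by
    intro m'' hm''
    rw [depUpd_apply]
    have hnn := canon_nonneg hs 1 m''
    split_ifs with h1 h2 h2
    · exfalso; omega
    · have := hchain 1 le_rfl hi1
      rw [h1.2]; linarith
    · linarith
    · linarith
  have hsum : ∑ m'' ∈ Finset.Icc 1 M, depUpd N i m' s 1 m''
      ≤ ∑ m'' ∈ Finset.Icc 1 M, s 1 m'' := by
    simp only [depUpd_apply]
    rw [Finset.sum_add_distrib, Finset.sum_sub_distrib]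
    have h1i : (1:ℕ) ∈ Finset.Icc 1 i := Finset.mem_Icc.mpr ⟨le_rfl, hi1⟩
    have e1 : ∑ m'' ∈ Finset.Icc 1 M, (if (1:ℕ) ∈ Finset.Icc 1 i ∧ m'' = m'
        then (N:ℝ)⁻¹ else 0) = (N:ℝ)⁻¹ := by
      simp only [h1i, true_and]
      rw [Finset.sum_ite_eq' (Finset.Icc 1 M) m' (fun _ => (N:ℝ)⁻¹)]
      simp [hmIcc]
    have e2 : ∑ m'' ∈ Finset.Icc 1 M, (if (1:ℕ) ∈ Finset.Icc 1 (i-1) ∧ m'' = 1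
        then (N:ℝ)⁻¹ else 0) ≤ (N:ℝ)⁻¹ := by
      by_cases hmem : (1:ℕ) ∈ Finset.Icc 1 (i-1)
      · simp only [hmem, true_and]
        rw [Finset.sum_ite_eq' (Finset.Icc 1 M) 1 (fun _ => (N:ℝ)⁻¹)]
        simp [h1Icc]
      · simp only [hmem, false_and, if_false, Finset.sum_const_zero]
        positivity
    rw [e1]
    linarith
  refine ⟨?_, ?_, ?_, ?_, ?_, ?_⟩
  · intro m'' hm''
    calc depUpd N i m' s 1 m''
        ≤ ∑ m₂ ∈ Finset.Icc 1 M, depUpd N i m' s 1 m₂ :=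
          Finset.single_le_sum (fun x hx => hrow x hx) hm''
      _ ≤ ∑ m₂ ∈ Finset.Icc 1 M, s 1 m₂ := hsum
      _ ≤ 1 := hs.2.2.2.1
  · intro m'' hm''
    rw [depUpd_apply]
    have hnn := canon_nonneg hs b m''
    split_ifs with h1 h2 h2
    · exfalso
      have := (Finset.mem_Icc.mp h1.1).2
      have := (Finset.mem_Icc.mp h2.1).2
      omega
    · have := hchain b (le_trans hi1 hib) (Finset.mem_Icc.mp h1.1).2
      rw [h1.2]; linarith
    · linarith
    · linarith
  · intro m'' hm'' i'' h1 h2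
    have hmono := hs.2.2.1 m'' hm'' i'' h1 h2
    rw [depUpd_apply, depUpd_apply]
    rcases eq_or_ne m'' m' with he | he
    · subst he
      have hne : ¬ (m'' = 1) := by omega
      simp only [Finset.mem_Icc, hne, and_false, if_false, and_true, add_zero]
      split_ifs with ha hb hb
      · linarith
      · exfalso; omega
      · have : i'' = i := by omega
        subst this; linarith
      · linarith
    · rcases eq_or_ne m'' 1 with he2 | he2
      · subst he2
        simp only [Finset.mem_Icc, he, and_false, if_false, and_true, sub_zero]
        split_ifs with ha hb hb <;> first | linarith | (exfalso; omega)
      · simp only [he, he2, and_false, if_false, sub_zero, add_zero]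
        exact hmono
  · calc ∑ m'' ∈ Finset.Icc 1 M, depUpd N i m' s 1 m''
        ≤ ∑ m'' ∈ Finset.Icc 1 M, s 1 m'' := hsum
      _ ≤ 1 := hs.2.2.2.1
  · intro m'' hm'' i'' hi''
    obtain ⟨hi''1, hi''b⟩ := Finset.mem_Icc.mp hi''
    obtain ⟨n, hn⟩ := hs.2.2.2.2.1 m'' hm'' i'' hi''
    rw [depUpd_apply]
    split_ifs with h1 h2 h2
    · exfalso; omega
    · have hii : i'' ≤ i := (Finset.mem_Icc.mp h1.1).2
      have hc : (N:ℝ)⁻¹ ≤ s i'' m'' := by rw [h1.2]; exact hchain i'' hi''1 hii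
      have hn1 : 1 ≤ n := by
        by_contra h0
        have : n = 0 := by omega
        subst this
        simp only [Nat.cast_zero, zero_div] at hn
        rw [hn] at hc; linarith
      refine ⟨n - 1, ?_⟩
      rw [hn, Nat.cast_sub hn1]
      push_cast
      rw [add_zero, sub_div, one_div]
    · refine ⟨n + 1, ?_⟩
      rw [hn]
      push_cast
      rw [sub_zero, add_div, one_div]
    · exact ⟨n, by rw [hn]; ring⟩
  · intro i'' m'' h
    have h0 := hs.2.2.2.2.2 i'' m'' h
    rw [depUpd_apply, h0]
    have f1 : ¬(i'' ∈ Finset.Icc 1 i ∧ m'' = m') := by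
      rintro ⟨ha, rfl⟩
      have ha' := Finset.mem_Icc.mp ha
      rcases h with h | h
      · exact h (Finset.mem_Icc.mpr ⟨ha'.1, le_trans ha'.2 hib⟩)
      · exact h hmIcc
    have f2 : ¬(i'' ∈ Finset.Icc 1 (i-1) ∧ m'' = 1) := by
      rintro ⟨ha, rfl⟩
      have ha' := Finset.mem_Icc.mp ha
      rcases h with h | h
      · exact h (Finset.mem_Icc.mpr ⟨ha'.1, by omega⟩)
      · exact h h1Icc
    rw [if_neg f1, if_neg f2]; ring

end AuxMem

section AuxGen

lemma sum_Icc_telescope (f : ℕ → ℝ) (b : ℕ) :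
    ∑ i ∈ Finset.Icc 1 b, (f i - f (i+1)) = f 1 - f (b+1) := by
  induction b with
  | zero => simp
  | succ k ih => rw [Finset.sum_Icc_succ_top (by omega), ih]; ring

lemma sum_erase_comm {α : Type*} [DecidableEq α] (A : Finset α) (g : α → α → ℝ) :
    ∑ x ∈ A, ∑ y ∈ A.erase x, g x y = ∑ y ∈ A, ∑ x ∈ A.erase y, g x y := by
  rw [Finset.sum_congr rfl (fun x hx => Finset.sum_erase_eq_sub (f := fun y => g x y) hx),
    Finset.sum_sub_distrib,
    Finset.sum_congr rfl (fun y hy => Finset.sum_erase_eq_sub (f := fun x => g x y) hy),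
    Finset.sum_sub_distrib, Finset.sum_comm]

lemma sum_ite_upd {E : Finset (ℕ → ℕ → ℝ)} (u : ℕ → ℕ → ℝ) (r : ℝ)
    (d : (ℕ → ℕ → ℝ) → ℝ) :
    ∑ s' ∈ E, (if s' = u then r else 0) * d s' = if u ∈ E then r * d u else 0 := by
  rw [← Finset.sum_ite_eq' E u (fun s' => r * d s')]
  exact Finset.sum_congr rfl (fun x _ => by split_ifs <;> simp

  )

/-- The stationary equation: the expectation of the generator applied to any
function vanishes. -/
lemma gen_zero (ℳ : LBModel) (f : (ℕ → ℕ → ℝ) → ℝ) :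
    ∑ s ∈ ℳ.SS, ℳ.pi s * ∑ s' ∈ ℳ.SS.erase s,
      lbRate ℳ.N ℳ.b ℳ.M (lamOf ℳ.N ℳ.α) ℳ.μ ℳ.p ℳ.A s s' * (f s' - f s) = 0 := by
  classical
  set Q := lbRate ℳ.N ℳ.b ℳ.M (lamOf ℳ.N ℳ.α) ℳ.μ ℳ.p ℳ.A with hQ
  have expand : ∀ s ∈ ℳ.SS, ℳ.pi s * ∑ s' ∈ ℳ.SS.erase s, Q s s' * (f s' - f s)
      = (∑ s' ∈ ℳ.SS.erase s, ℳ.pi s * Q s s' * f s')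
        - f s * (ℳ.pi s * ∑ s' ∈ ℳ.SS.erase s, Q s s') := by
    intro s _
    rw [Finset.mul_sum, Finset.mul_sum, Finset.mul_sum, ← Finset.sum_sub_distrib]
    exact Finset.sum_congr rfl (fun x _ => by ring)
  rw [Finset.sum_congr rfl expand, Finset.sum_sub_distrib]
  have h1 : ∑ s ∈ ℳ.SS, ∑ s' ∈ ℳ.SS.erase s, ℳ.pi s * Q s s' * f s'
      = ∑ s' ∈ ℳ.SS, ∑ s ∈ ℳ.SS.erase s', ℳ.pi s * Q s s' * f s' :=
    sum_erase_comm ℳ.SS (fun s s' => ℳ.pi s * Q s s' * f s')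
  have h2 : ∀ s' ∈ ℳ.SS, ∑ s ∈ ℳ.SS.erase s', ℳ.pi s * Q s s' * f s'
      = f s' * (ℳ.pi s' * ∑ s'' ∈ ℳ.SS.erase s', Q s' s'') := by
    intro s' hs'
    rw [← ℳ.hstat s' hs', Finset.mul_sum]
    exact Finset.sum_congr rfl (fun x _ => by ring)
  rw [h1, Finset.sum_congr rfl h2, sub_self]

end AuxGen

section AuxPointwise

/-- Pointwise computation of the generator applied to a function of `s 1 m`, for `2 ≤ m ≤ M`. -/
lemma gen_pointwise (ℳ : LBModel) {m : ℕ} (hm2 : 2 ≤ m) (hmM : m ≤ ℳ.M)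
    {s : ℕ → ℕ → ℝ} (hsSS : s ∈ ℳ.SS) (g : ℝ → ℝ) :
    ∑ s' ∈ ℳ.SS.erase s,
        lbRate ℳ.N ℳ.b ℳ.M (lamOf ℳ.N ℳ.α) ℳ.μ ℳ.p ℳ.A s s' * (g (s' 1 m) - g (s 1 m))
      = ℳ.p (m-1) * ℳ.μ (m-1) * ℳ.N * s 1 (m-1)
          * (g (s 1 m + (ℳ.N:ℝ)⁻¹) - g (s 1 m))
        + ℳ.μ m * ℳ.N * s 1 m * (g (s 1 m - (ℳ.N:ℝ)⁻¹) - g (s 1 m)) := by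
  classical
  have hcanon : canonState ℳ.N ℳ.b ℳ.M s := (ℳ.hSS s).mp hsSS
  have hN0 : 0 < ℳ.N := by have := ℳ.hN; omega
  have hNR : (0:ℝ) < (ℳ.N:ℝ) := by exact_mod_cast hN0
  have hc0 : (0:ℝ) < (ℳ.N:ℝ)⁻¹ := by positivity
  have hb1 : 1 ≤ ℳ.b := ℳ.hb
  have hmIcc : m ∈ Finset.Icc 1 ℳ.M := Finset.mem_Icc.mpr ⟨by omega, hmM⟩
  have hm1Icc : m - 1 ∈ Finset.Icc 1 ℳ.M := Finset.mem_Icc.mpr ⟨by omega, by omega⟩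
  have hAid : ℳ.A 0 m s = ℳ.A 1 m s := ℳ.hAidle s hsSS m (Finset.mem_Icc.mpr ⟨hm2, hmM⟩)
  set c : ℝ := (ℳ.N:ℝ)⁻¹ with hc
  set E := ℳ.SS.erase s with hE
  set dD : ℝ := g (s 1 m - c) - g (s 1 m) with hdD
  set dU : ℝ := g (s 1 m + c) - g (s 1 m) with hdU
  -- step 1: expand lbRate and exchange sums
  have step1 : ∑ s' ∈ E,
      lbRate ℳ.N ℳ.b ℳ.M (lamOf ℳ.N ℳ.α) ℳ.μ ℳ.p ℳ.A s s' * (g (s' 1 m) - g (s 1 m))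
      = ∑ i ∈ Finset.Icc 1 ℳ.b, ∑ m' ∈ Finset.Icc 1 ℳ.M,
          ((if arrUpd ℳ.N i m' s ∈ E then
              (lamOf ℳ.N ℳ.α * ℳ.N * (ℳ.A (i-1) m' s - ℳ.A i m' s))
                * (g (arrUpd ℳ.N i m' s 1 m) - g (s 1 m)) else 0)
            + (if depUpd ℳ.N i m' s ∈ E then
                ((1 - ℳ.p m') * ℳ.μ m' * ℳ.N * (s i m' - s (i+1) m'))
                  * (g (depUpd ℳ.N i m' s 1 m) - g (s 1 m)) else 0)
            + (if phaUpd ℳ.N i m' s ∈ E then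
                (ℳ.p m' * ℳ.μ m' * ℳ.N * (s i m' - s (i+1) m'))
                  * (g (phaUpd ℳ.N i m' s 1 m) - g (s 1 m)) else 0)) := by
    have e1 : ∀ s' ∈ E,
        lbRate ℳ.N ℳ.b ℳ.M (lamOf ℳ.N ℳ.α) ℳ.μ ℳ.p ℳ.A s s' * (g (s' 1 m) - g (s 1 m))
        = ∑ i ∈ Finset.Icc 1 ℳ.b, ∑ m' ∈ Finset.Icc 1 ℳ.M,
            ((if s' = arrUpd ℳ.N i m' s then
                (lamOf ℳ.N ℳ.α * ℳ.N * (ℳ.A (i-1) m' s - ℳ.A i m' s))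
                  * (g (s' 1 m) - g (s 1 m)) else 0)
              + (if s' = depUpd ℳ.N i m' s then
                  ((1 - ℳ.p m') * ℳ.μ m' * ℳ.N * (s i m' - s (i+1) m'))
                    * (g (s' 1 m) - g (s 1 m)) else 0)
              + (if s' = phaUpd ℳ.N i m' s then
                  (ℳ.p m' * ℳ.μ m' * ℳ.N * (s i m' - s (i+1) m'))
                    * (g (s' 1 m) - g (s 1 m)) else 0)) := by
      intro s' _
      rw [lbRate, Finset.sum_mul]
      refine Finset.sum_congr rfl (fun i _ => ?_)
      rw [Finset.sum_mul]
      refine Finset.sum_congr rfl (fun m' _ => ?_)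
      rw [add_mul, add_mul]
      congr 1 <;> [skip; split_ifs <;> simp]
      congr 1 <;> split_ifs <;> simp
    rw [Finset.sum_congr rfl e1, Finset.sum_comm]
    refine Finset.sum_congr rfl (fun i _ => ?_)
    rw [Finset.sum_comm]
    refine Finset.sum_congr rfl (fun m' _ => ?_)
    rw [Finset.sum_add_distrib, Finset.sum_add_distrib]
    congr 1
    congr 1
    · exact Finset.sum_ite_eq' E _ _
    · exact Finset.sum_ite_eq' E _ _
    · exact Finset.sum_ite_eq' E _ _
  rw [step1]
  -- step 2: evaluate each (i, m') term
  have claimA : ∀ i ∈ Finset.Icc 1 ℳ.b, ∀ m' ∈ Finset.Icc 1 ℳ.M,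
      (if arrUpd ℳ.N i m' s ∈ E then
          (lamOf ℳ.N ℳ.α * ℳ.N * (ℳ.A (i-1) m' s - ℳ.A i m' s))
            * (g (arrUpd ℳ.N i m' s 1 m) - g (s 1 m)) else 0) = 0 := by
    intro i _ m' _
    by_cases hcase : i = 1 ∧ m' = m
    · obtain ⟨rfl, rfl⟩ := hcase
      simp [hAid]
    · have hne : ¬((1:ℕ) = i ∧ m = m') := by omega
      rw [arrUpd_apply, if_neg hne, add_zero, sub_self, mul_zero, ite_self]
  have claimD : ∀ i ∈ Finset.Icc 1 ℳ.b, ∀ m' ∈ Finset.Icc 1 ℳ.M,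
      (if depUpd ℳ.N i m' s ∈ E then
          ((1 - ℳ.p m') * ℳ.μ m' * ℳ.N * (s i m' - s (i+1) m'))
            * (g (depUpd ℳ.N i m' s 1 m) - g (s 1 m)) else 0)
      = (if m' = m then (1 - ℳ.p m) * ℳ.μ m * ℳ.N * (s i m - s (i+1) m) * dD else 0) := by
    intro i hi m' _
    obtain ⟨hi1, hib⟩ := Finset.mem_Icc.mp hi
    by_cases hm' : m' = m
    · subst hm'
      rw [if_pos rfl]
      have h1i : (1:ℕ) ∈ Finset.Icc 1 i := Finset.mem_Icc.mpr ⟨le_rfl, hi1⟩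
      have hval : depUpd ℳ.N i m' s 1 m' = s 1 m' - c := by
        rw [depUpd_apply, if_pos ⟨h1i, rfl⟩, if_neg (fun hh => by have := hh.2; omega)]
        rw [add_zero]
      by_cases hq : s (i+1) m' < s i m'
      · have hmem : depUpd ℳ.N i m' s ∈ ℳ.SS :=
          (ℳ.hSS _).mpr (dep_mem hN0 hcanon hi1 hib hm2 hmM hq)
        have hne : depUpd ℳ.N i m' s ≠ s := by
          intro heq
          have := congrFun (congrFun heq 1) m'
          rw [hval] at this
          linarith
        rw [if_pos (Finset.mem_erase.mpr ⟨hne, hmem⟩), hval, hdD]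
      · have heq0 : s i m' - s (i+1) m' = 0 := by
          have := canon_mono' hcanon hmIcc hi1 (Nat.le_succ i)
          push_neg at hq
          linarith
        rw [heq0]
        simp
    · rw [if_neg hm']
      have hval : depUpd ℳ.N i m' s 1 m = s 1 m := by
        rw [depUpd_apply, if_neg (fun hh => hm' hh.2.symm), if_neg (fun hh => by have := hh.2; omega)]
        ring
      rw [hval, sub_self, mul_zero, ite_self]
  have claimP : ∀ i ∈ Finset.Icc 1 ℳ.b, ∀ m' ∈ Finset.Icc 1 ℳ.M,
      (if phaUpd ℳ.N i m' s ∈ E then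
          (ℳ.p m' * ℳ.μ m' * ℳ.N * (s i m' - s (i+1) m'))
            * (g (phaUpd ℳ.N i m' s 1 m) - g (s 1 m)) else 0)
      = (if m' = m then ℳ.p m * ℳ.μ m * ℳ.N * (s i m - s (i+1) m) * dD else 0)
        + (if m' = m - 1 then
            ℳ.p (m-1) * ℳ.μ (m-1) * ℳ.N * (s i (m-1) - s (i+1) (m-1)) * dU else 0) := by
    intro i hi m' _
    obtain ⟨hi1, hib⟩ := Finset.mem_Icc.mp hi
    have h1i : (1:ℕ) ∈ Finset.Icc 1 i := Finset.mem_Icc.mpr ⟨le_rfl, hi1⟩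
    by_cases hm' : m' = m
    · subst hm'
      rw [if_pos rfl, if_neg (show ¬(m' = m' - 1) by omega), add_zero]
      have hval : phaUpd ℳ.N i m' s 1 m' = s 1 m' - c := by
        rw [phaUpd_apply, if_pos ⟨h1i, rfl⟩, if_neg (fun hh => by have := hh.2; omega)]
        rw [add_zero]
      by_cases hq : s (i+1) m' < s i m'
      · by_cases hMM : m' + 1 ≤ ℳ.M
        · have hmem : phaUpd ℳ.N i m' s ∈ ℳ.SS :=
            (ℳ.hSS _).mpr (pha_mem hN0 hcanon hi1 hib (by omega) hMM hq)
          have hne : phaUpd ℳ.N i m' s ≠ s := by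
            intro heq
            have := congrFun (congrFun heq 1) m'
            rw [hval] at this
            linarith
          rw [if_pos (Finset.mem_erase.mpr ⟨hne, hmem⟩), hval, hdD]
        · have hpm : ℳ.p m' = 0 := by
            have : m' = ℳ.M := by omega
            rw [this]; exact ℳ.hpM
          rw [hpm]
          simp
      · have heq0 : s i m' - s (i+1) m' = 0 := by
          have := canon_mono' hcanon hmIcc hi1 (Nat.le_succ i)
          push_neg at hq
          linarith
        rw [heq0]
        simp
    · by_cases hm'' : m' = m - 1
      · subst hm''
        rw [if_neg hm', if_pos rfl, zero_add]
        have hval : phaUpd ℳ.N i (m-1) s 1 m = s 1 m + c := by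
          rw [phaUpd_apply, if_neg (fun hh => by have := hh.2; omega), if_pos (show (1 ∈ Finset.Icc 1 i) ∧ m = (m-1)+1 from ⟨h1i, by omega⟩)]
          rw [sub_zero]
        by_cases hq : s (i+1) (m-1) < s i (m-1)
        · have hmem : phaUpd ℳ.N i (m-1) s ∈ ℳ.SS :=
            (ℳ.hSS _).mpr (pha_mem hN0 hcanon hi1 hib (by omega) (by omega) hq)
          have hne : phaUpd ℳ.N i (m-1) s ≠ s := by
            intro heq
            have := congrFun (congrFun heq 1) m
            rw [hval] at this
            linarith
          rw [if_pos (Finset.mem_erase.mpr ⟨hne, hmem⟩), hval, hdU]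
        · have heq0 : s i (m-1) - s (i+1) (m-1) = 0 := by
            have := canon_mono' hcanon hm1Icc hi1 (Nat.le_succ i)
            push_neg at hq
            linarith
          rw [heq0]
          simp
      · rw [if_neg hm', if_neg hm'', add_zero]
        have hval : phaUpd ℳ.N i m' s 1 m = s 1 m := by
          rw [phaUpd_apply, if_neg (fun hh => hm' hh.2.symm), if_neg (fun hh => by have := hh.2; omega)]
          ring
        rw [hval, sub_self, mul_zero, ite_self]
  -- step 3: sum the evaluated terms
  trans (∑ i ∈ Finset.Icc 1 ℳ.b, ∑ m' ∈ Finset.Icc 1 ℳ.M,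
      ((if m' = m then (1 - ℳ.p m) * ℳ.μ m * ℳ.N * (s i m - s (i+1) m) * dD else 0)
        + ((if m' = m then ℳ.p m * ℳ.μ m * ℳ.N * (s i m - s (i+1) m) * dD else 0)
          + (if m' = m - 1 then
              ℳ.p (m-1) * ℳ.μ (m-1) * ℳ.N * (s i (m-1) - s (i+1) (m-1)) * dU else 0))))
  · refine Finset.sum_congr rfl (fun i hi => Finset.sum_congr rfl (fun m' hm' => ?_))
    rw [claimA i hi m' hm', claimD i hi m' hm', claimP i hi m' hm', zero_add]
  have inner : ∀ i ∈ Finset.Icc 1 ℳ.b,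
      (∑ m' ∈ Finset.Icc 1 ℳ.M,
        ((if m' = m then (1 - ℳ.p m) * ℳ.μ m * ℳ.N * (s i m - s (i+1) m) * dD else 0)
          + ((if m' = m then ℳ.p m * ℳ.μ m * ℳ.N * (s i m - s (i+1) m) * dD else 0)
            + (if m' = m - 1 then
                ℳ.p (m-1) * ℳ.μ (m-1) * ℳ.N * (s i (m-1) - s (i+1) (m-1)) * dU else 0))))
      = ℳ.μ m * ℳ.N * (s i m - s (i+1) m) * dD
        + ℳ.p (m-1) * ℳ.μ (m-1) * ℳ.N * (s i (m-1) - s (i+1) (m-1)) * dU := by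
    intro i _
    rw [Finset.sum_add_distrib, Finset.sum_add_distrib]
    rw [Finset.sum_ite_eq' (Finset.Icc 1 ℳ.M) m
        (fun _ => (1 - ℳ.p m) * ℳ.μ m * ℳ.N * (s i m - s (i+1) m) * dD),
      Finset.sum_ite_eq' (Finset.Icc 1 ℳ.M) m
        (fun _ => ℳ.p m * ℳ.μ m * ℳ.N * (s i m - s (i+1) m) * dD),
      Finset.sum_ite_eq' (Finset.Icc 1 ℳ.M) (m-1)
        (fun _ => ℳ.p (m-1) * ℳ.μ (m-1) * ℳ.N * (s i (m-1) - s (i+1) (m-1)) * dU),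
      if_pos hmIcc, if_pos hmIcc, if_pos hm1Icc]
    ring
  rw [Finset.sum_congr rfl inner, Finset.sum_add_distrib]
  have t1 : ∑ i ∈ Finset.Icc 1 ℳ.b, ℳ.μ m * ℳ.N * (s i m - s (i+1) m) * dD
      = ℳ.μ m * ℳ.N * s 1 m * dD := by
    have e : ∀ i ∈ Finset.Icc 1 ℳ.b, ℳ.μ m * ℳ.N * (s i m - s (i+1) m) * dD
        = (ℳ.μ m * ℳ.N * dD) * (s i m - s (i+1) m) := fun i _ => by ring
    rw [Finset.sum_congr rfl e, ← Finset.mul_sum,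
      sum_Icc_telescope (fun i => s i m) ℳ.b,
      hcanon.2.2.2.2.2 (ℳ.b+1) m (by left; simp only [Finset.mem_Icc]; omega)]
    ring
  have t2 : ∑ i ∈ Finset.Icc 1 ℳ.b,
      ℳ.p (m-1) * ℳ.μ (m-1) * ℳ.N * (s i (m-1) - s (i+1) (m-1)) * dU
      = ℳ.p (m-1) * ℳ.μ (m-1) * ℳ.N * s 1 (m-1) * dU := by
    have e : ∀ i ∈ Finset.Icc 1 ℳ.b,
        ℳ.p (m-1) * ℳ.μ (m-1) * ℳ.N * (s i (m-1) - s (i+1) (m-1)) * dU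
        = (ℳ.p (m-1) * ℳ.μ (m-1) * ℳ.N * dU) * (s i (m-1) - s (i+1) (m-1)) := fun i _ => by ring
    rw [Finset.sum_congr rfl e, ← Finset.mul_sum,
      sum_Icc_telescope (fun i => s i (m-1)) ℳ.b,
      hcanon.2.2.2.2.2 (ℳ.b+1) (m-1) (by left; simp only [Finset.mem_Icc]; omega)]
    ring
  rw [t1, t2]
  ring

end AuxPointwise

section AuxProb

variable (ℳ : LBModel)

lemma prob_nonneg (E : (ℕ → ℕ → ℝ) → Prop) : 0 ≤ ℳ.prob E := by
  refine Finset.sum_nonneg (fun s hs => ?_)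
  split_ifs
  · exact ℳ.hpi0 s hs
  · exact le_refl 0

lemma prob_le_one (E : (ℕ → ℕ → ℝ) → Prop) : ℳ.prob E ≤ 1 := by
  rw [← ℳ.hpi1]
  refine Finset.sum_le_sum (fun s hs => ?_)
  split_ifs
  · exact le_refl _
  · exact ℳ.hpi0 s hs

lemma prob_mono {E1 E2 : (ℕ → ℕ → ℝ) → Prop}
    (h : ∀ s ∈ ℳ.SS, E1 s → E2 s) : ℳ.prob E1 ≤ ℳ.prob E2 := by
  refine Finset.sum_le_sum (fun s hs => ?_)
  by_cases h1 : E1 s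
  · rw [if_pos h1, if_pos (h s hs h1)]
  · rw [if_neg h1]
    split_ifs
    · exact ℳ.hpi0 s hs
    · exact le_refl 0

lemma prob_empty {E : (ℕ → ℕ → ℝ) → Prop}
    (h : ∀ s ∈ ℳ.SS, ¬ E s) : ℳ.prob E = 0 :=
  Finset.sum_eq_zero (fun s hs => if_neg (h s hs))

lemma prob_compl (E : (ℕ → ℕ → ℝ) → Prop) :
    ℳ.prob (fun s => ¬ E s) = 1 - ℳ.prob E := by
  rw [eq_sub_iff_add_eq, ← ℳ.hpi1, LBModel.prob, LBModel.prob, ← Finset.sum_add_distrib]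
  refine Finset.sum_congr rfl (fun s hs => ?_)
  by_cases h1 : E s
  · rw [if_pos h1, if_neg (not_not.mpr h1), zero_add]
  · rw [if_neg h1, if_pos h1, add_zero]

/-- The key stationary identity for functions of `s 1 m`. -/
lemma key_identity {m : ℕ} (hm2 : 2 ≤ m) (hmM : m ≤ ℳ.M) (g : ℝ → ℝ) :
    ∑ s ∈ ℳ.SS, ℳ.pi s *
      (ℳ.p (m-1) * ℳ.μ (m-1) * s 1 (m-1) * (g (s 1 m + (ℳ.N:ℝ)⁻¹) - g (s 1 m))
        + ℳ.μ m * s 1 m * (g (s 1 m - (ℳ.N:ℝ)⁻¹) - g (s 1 m))) = 0 := by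
  have hN0 : 0 < ℳ.N := by have := ℳ.hN; omega
  have hNR : (0:ℝ) < (ℳ.N:ℝ) := by exact_mod_cast hN0
  have h0 := gen_zero ℳ (fun s => g (s 1 m))
  rw [Finset.sum_congr rfl (fun s hs => by
    rw [gen_pointwise ℳ hm2 hmM hs g])] at h0
  have h1 : ∑ s ∈ ℳ.SS, ℳ.pi s *
      (ℳ.p (m-1) * ℳ.μ (m-1) * ℳ.N * s 1 (m-1) * (g (s 1 m + (ℳ.N:ℝ)⁻¹) - g (s 1 m))
        + ℳ.μ m * ℳ.N * s 1 m * (g (s 1 m - (ℳ.N:ℝ)⁻¹) - g (s 1 m)))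
      = (ℳ.N:ℝ) * ∑ s ∈ ℳ.SS, ℳ.pi s *
        (ℳ.p (m-1) * ℳ.μ (m-1) * s 1 (m-1) * (g (s 1 m + (ℳ.N:ℝ)⁻¹) - g (s 1 m))
          + ℳ.μ m * s 1 m * (g (s 1 m - (ℳ.N:ℝ)⁻¹) - g (s 1 m))) := by
    rw [Finset.mul_sum]
    exact Finset.sum_congr rfl (fun s _ => by ring)
  rw [h1] at h0
  exact (mul_eq_zero.mp h0).resolve_left (ne_of_gt hNR)

/-- Flow balance between phases `m-1` and `m`. -/
lemma flow_balance {m : ℕ} (hm2 : 2 ≤ m) (hmM : m ≤ ℳ.M) :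
    ℳ.p (m-1) * ℳ.μ (m-1) * (∑ s ∈ ℳ.SS, ℳ.pi s * s 1 (m-1))
      = ℳ.μ m * (∑ s ∈ ℳ.SS, ℳ.pi s * s 1 m) := by
  have hN0 : 0 < ℳ.N := by have := ℳ.hN; omega
  have hNR : (0:ℝ) < (ℳ.N:ℝ) := by exact_mod_cast hN0
  have h0 := key_identity ℳ hm2 hmM id
  simp only [id] at h0
  have h1 : ∑ s ∈ ℳ.SS, ℳ.pi s *
      (ℳ.p (m-1) * ℳ.μ (m-1) * s 1 (m-1) * (s 1 m + (ℳ.N:ℝ)⁻¹ - s 1 m)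
        + ℳ.μ m * s 1 m * (s 1 m - (ℳ.N:ℝ)⁻¹ - s 1 m))
      = (ℳ.N:ℝ)⁻¹ * (ℳ.p (m-1) * ℳ.μ (m-1) * (∑ s ∈ ℳ.SS, ℳ.pi s * s 1 (m-1))
          - ℳ.μ m * (∑ s ∈ ℳ.SS, ℳ.pi s * s 1 m)) := by
    rw [mul_sub]
    simp only [Finset.mul_sum]
    rw [← Finset.sum_sub_distrib]
    exact Finset.sum_congr rfl (fun s _ => by ring)
  rw [h1] at h0
  have h2 := (mul_eq_zero.mp h0).resolve_left (by positivity)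
  linarith [h2]

/-- Level crossing identity. -/
lemma level_crossing {m : ℕ} (hm2 : 2 ≤ m) (hmM : m ≤ ℳ.M) (k : ℕ) :
    ∑ s ∈ ℳ.SS, ℳ.pi s * (ℳ.p (m-1) * ℳ.μ (m-1) * s 1 (m-1)
        * (if s 1 m = (k:ℝ)/(ℳ.N:ℝ) then 1 else 0))
      = ℳ.μ m * (((k:ℝ)+1)/(ℳ.N:ℝ))
          * ∑ s ∈ ℳ.SS, ℳ.pi s * (if s 1 m = ((k:ℝ)+1)/(ℳ.N:ℝ) then 1 else 0) := by
  classical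
  have hN0 : 0 < ℳ.N := by have := ℳ.hN; omega
  have hNR : (0:ℝ) < (ℳ.N:ℝ) := by exact_mod_cast hN0
  have hmIcc : m ∈ Finset.Icc 1 ℳ.M := Finset.mem_Icc.mpr ⟨by omega, hmM⟩
  have h0 := key_identity ℳ hm2 hmM (fun x => if x ≤ (k:ℝ)/(ℳ.N:ℝ) then 1 else 0)
  have hdiveq : ∀ a b : ℕ, ((a:ℝ)/(ℳ.N:ℝ) = (b:ℝ)/(ℳ.N:ℝ)) ↔ a = b := by
    intro a b
    constructor
    · intro h
      field_simp at h
      exact_mod_cast h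
    · rintro rfl; rfl
  have hdivle : ∀ a b : ℕ, ((a:ℝ)/(ℳ.N:ℝ) ≤ (b:ℝ)/(ℳ.N:ℝ)) ↔ a ≤ b := by
    intro a b
    rw [div_le_div_iff_of_pos_right hNR]
    exact Nat.cast_le
  have heval : ∀ s ∈ ℳ.SS, ℳ.pi s *
      (ℳ.p (m-1) * ℳ.μ (m-1) * s 1 (m-1)
          * ((if s 1 m + (ℳ.N:ℝ)⁻¹ ≤ (k:ℝ)/(ℳ.N:ℝ) then (1:ℝ) else 0)
            - (if s 1 m ≤ (k:ℝ)/(ℳ.N:ℝ) then 1 else 0))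
        + ℳ.μ m * s 1 m
          * ((if s 1 m - (ℳ.N:ℝ)⁻¹ ≤ (k:ℝ)/(ℳ.N:ℝ) then (1:ℝ) else 0)
            - (if s 1 m ≤ (k:ℝ)/(ℳ.N:ℝ) then 1 else 0)))
      = ℳ.pi s * (ℳ.μ m * (((k:ℝ)+1)/(ℳ.N:ℝ))
            * (if s 1 m = ((k:ℝ)+1)/(ℳ.N:ℝ) then 1 else 0))
        - ℳ.pi s * (ℳ.p (m-1) * ℳ.μ (m-1) * s 1 (m-1)
            * (if s 1 m = (k:ℝ)/(ℳ.N:ℝ) then 1 else 0)) := by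
    intro s hs
    have hcanon : canonState ℳ.N ℳ.b ℳ.M s := (ℳ.hSS s).mp hs
    obtain ⟨n, hn⟩ := canon_grid hcanon hmIcc 1 le_rfl
    rw [hn]
    have e1 : (n:ℝ)/(ℳ.N:ℝ) + (ℳ.N:ℝ)⁻¹ = ((n+1:ℕ):ℝ)/(ℳ.N:ℝ) := by
      push_cast
      rw [add_div, one_div]
    have e2 : (n:ℝ)/(ℳ.N:ℝ) - (ℳ.N:ℝ)⁻¹ = ((n:ℝ)-1)/(ℳ.N:ℝ) := by
      rw [sub_div, one_div]
    have e3 : ((k:ℝ)+1)/(ℳ.N:ℝ) = ((k+1:ℕ):ℝ)/(ℳ.N:ℝ) := by push_cast; ring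
    rw [e1, e2, e3]
    have c3 : (((n:ℝ)-1)/(ℳ.N:ℝ) ≤ (k:ℝ)/(ℳ.N:ℝ)) ↔ n ≤ k + 1 := by
      rw [div_le_div_iff_of_pos_right hNR]
      constructor
      · intro h
        have h' : (n:ℝ) ≤ (k:ℝ) + 1 := by linarith
        exact_mod_cast h'
      · intro h
        have h' : (n:ℝ) ≤ (k:ℝ) + 1 := by exact_mod_cast h
        linarith
    simp only [hdiveq, hdivle, c3]
    split_ifs <;> first | (exfalso; omega) | (subst_vars; push_cast; ring) | (push_cast; ring)
  rw [Finset.sum_congr rfl heval, Finset.sum_sub_distrib] at h0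
  have h2 : ∑ s ∈ ℳ.SS, ℳ.pi s * (ℳ.μ m * (((k:ℝ)+1)/(ℳ.N:ℝ))
      * (if s 1 m = ((k:ℝ)+1)/(ℳ.N:ℝ) then 1 else 0))
      = ℳ.μ m * (((k:ℝ)+1)/(ℳ.N:ℝ))
        * ∑ s ∈ ℳ.SS, ℳ.pi s * (if s 1 m = ((k:ℝ)+1)/(ℳ.N:ℝ) then 1 else 0) := by
    simp only [Finset.mul_sum]
    exact Finset.sum_congr rfl (fun s _ => by ring)
  rw [h2] at h0
  linarith [h0]

end AuxProb

section AuxRec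

variable (ℳ : LBModel)

lemma sum_ind_range (k n : ℕ) (c : ℝ) :
    ∑ j ∈ Finset.range (k+1), (if n = j then c else 0) = if n ≤ k then c else 0 := by
  by_cases h : n ≤ k
  · rw [if_pos h]
    rw [Finset.sum_eq_single_of_mem n (Finset.mem_range.mpr (by omega))]
    · rw [if_pos rfl]
    · intro b _ hb
      rw [if_neg (fun hc => hb hc.symm)]
  · rw [if_neg h]
    refine Finset.sum_eq_zero (fun j hj => ?_)
    rw [Finset.mem_range] at hj
    rw [if_neg (by omega)]

lemma prob_eq_ind (E : (ℕ → ℕ → ℝ) → Prop) [DecidablePred E] :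
    ∑ s ∈ ℳ.SS, ℳ.pi s * (if E s then (1:ℝ) else 0) = ℳ.prob E := by
  refine Finset.sum_congr rfl (fun s _ => ?_)
  by_cases h : E s
  · rw [if_pos h, if_pos h, mul_one]
  · rw [if_neg h, if_neg h, mul_zero]

lemma coxV_nonneg {m : ℕ} (hm : m ∈ Finset.Icc 1 ℳ.M) : 0 ≤ coxV ℳ.μ ℳ.p m := by
  obtain ⟨h1, h2⟩ := Finset.mem_Icc.mp hm
  refine div_nonneg (Finset.prod_nonneg (fun i hi => ?_)) (le_of_lt (ℳ.hμ m hm))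
  obtain ⟨hi1, hi2⟩ := Finset.mem_Icc.mp hi
  exact ℳ.hp0 i (Finset.mem_Icc.mpr ⟨hi1, by omega⟩)

lemma coxV_ratio {m : ℕ} (hm2 : 2 ≤ m) (hmM : m ≤ ℳ.M) :
    ℳ.p (m-1) * ℳ.μ (m-1) * coxV ℳ.μ ℳ.p (m-1) = ℳ.μ m * coxV ℳ.μ ℳ.p m := by
  have hμm : ℳ.μ m ≠ 0 := ne_of_gt (ℳ.hμ m (Finset.mem_Icc.mpr ⟨by omega, hmM⟩))
  have hμm1 : ℳ.μ (m-1) ≠ 0 :=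
    ne_of_gt (ℳ.hμ (m-1) (Finset.mem_Icc.mpr ⟨by omega, by omega⟩))
  rw [coxV, coxV]
  have h2 : m - 1 - 1 = m - 2 := by omega
  have h1 : m - 1 = (m - 2) + 1 := by omega
  rw [h2, h1, Finset.prod_Icc_succ_top (show 1 ≤ m - 2 + 1 by omega)]
  rw [h1] at hμm1
  field_simp

/-- The one-step level inequality. -/
lemma level_ineq {m : ℕ} (hm2 : 2 ≤ m) (hmM : m ≤ ℳ.M)
    (hv' : 0 < coxV ℳ.μ ℳ.p (m-1)) (L' : ℝ) (hL0 : 0 ≤ L') (k : ℕ) :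
    ℳ.μ m * (coxV ℳ.μ ℳ.p m / coxV ℳ.μ ℳ.p (m-1)) * L' *
        (ℳ.prob (fun s => s 1 m = (k:ℝ)/(ℳ.N:ℝ))
          - ℳ.prob (fun s => s 1 m = (k:ℝ)/(ℳ.N:ℝ) ∧ s 1 (m-1) < L'))
      ≤ ℳ.μ m * (((k:ℝ)+1)/(ℳ.N:ℝ))
          * ℳ.prob (fun s => s 1 m = ((k:ℝ)+1)/(ℳ.N:ℝ)) := by
  classical
  have hm1Icc : m - 1 ∈ Finset.Icc 1 ℳ.M := Finset.mem_Icc.mpr ⟨by omega, by omega⟩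
  have hβ0 : 0 ≤ ℳ.p (m-1) * ℳ.μ (m-1) :=
    mul_nonneg (ℳ.hp0 (m-1) hm1Icc) (le_of_lt (ℳ.hμ (m-1) hm1Icc))
  have hβ : ℳ.μ m * (coxV ℳ.μ ℳ.p m / coxV ℳ.μ ℳ.p (m-1)) = ℳ.p (m-1) * ℳ.μ (m-1) := by
    rw [mul_div_assoc', ← coxV_ratio ℳ hm2 hmM, mul_div_assoc, div_self (ne_of_gt hv'),
      mul_one]
  rw [hβ]
  have h2 := level_crossing ℳ hm2 hmM k
  rw [prob_eq_ind ℳ (fun s => s 1 m = ((k:ℝ)+1)/(ℳ.N:ℝ))] at h2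
  rw [← h2]
  rw [← prob_eq_ind ℳ (fun s => s 1 m = (k:ℝ)/(ℳ.N:ℝ)),
    ← prob_eq_ind ℳ (fun s => s 1 m = (k:ℝ)/(ℳ.N:ℝ) ∧ s 1 (m-1) < L'),
    ← Finset.sum_sub_distrib, Finset.mul_sum]
  refine Finset.sum_le_sum (fun s hs => ?_)
  have hY0 : 0 ≤ s 1 (m-1) := canon_nonneg ((ℳ.hSS s).mp hs) 1 (m-1)
  have hpi := ℳ.hpi0 s hs
  by_cases h1 : s 1 m = (k:ℝ)/(ℳ.N:ℝ)
  · by_cases h2 : s 1 (m-1) < L'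
    · rw [if_pos h1, if_pos ⟨h1, h2⟩]
      have : (0:ℝ) ≤ ℳ.pi s * (ℳ.p (m-1) * ℳ.μ (m-1) * s 1 (m-1) * 1) := by positivity
      nlinarith
    · rw [if_pos h1, if_neg (fun hh => h2 hh.2)]
      push_neg at h2
      nlinarith [mul_le_mul_of_nonneg_left h2 (mul_nonneg hβ0 hpi)]
  · rw [if_neg h1, if_neg (fun hh => h1 hh.1)]
    simp only [sub_self, mul_zero]
    positivity

/-- Cumulative distribution as a sum of point masses. -/
lemma G_eq_sum {m : ℕ} (hm2 : 2 ≤ m) (hmM : m ≤ ℳ.M) (k : ℕ) :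
    ℳ.prob (fun s => s 1 m ≤ (k:ℝ)/(ℳ.N:ℝ))
      = ∑ j ∈ Finset.range (k+1), ℳ.prob (fun s => s 1 m = (j:ℝ)/(ℳ.N:ℝ)) := by
  classical
  have hN0 : 0 < ℳ.N := by have := ℳ.hN; omega
  have hNR : (0:ℝ) < (ℳ.N:ℝ) := by exact_mod_cast hN0
  have hmIcc : m ∈ Finset.Icc 1 ℳ.M := Finset.mem_Icc.mpr ⟨by omega, hmM⟩
  have hdiveq : ∀ a b : ℕ, ((a:ℝ)/(ℳ.N:ℝ) = (b:ℝ)/(ℳ.N:ℝ)) ↔ a = b := by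
    intro a b
    constructor
    · intro h
      field_simp at h
      exact_mod_cast h
    · rintro rfl; rfl
  have hdivle : ∀ a b : ℕ, ((a:ℝ)/(ℳ.N:ℝ) ≤ (b:ℝ)/(ℳ.N:ℝ)) ↔ a ≤ b := by
    intro a b
    rw [div_le_div_iff_of_pos_right hNR]
    exact Nat.cast_le
  simp only [LBModel.prob]
  rw [Finset.sum_comm]
  refine Finset.sum_congr rfl (fun s hs => ?_)
  obtain ⟨n, hn⟩ := canon_grid ((ℳ.hSS s).mp hs) hmIcc 1 le_rfl
  have e : ∀ j ∈ Finset.range (k+1),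
      (if s 1 m = (j:ℝ)/(ℳ.N:ℝ) then ℳ.pi s else 0) = (if n = j then ℳ.pi s else 0) := by
    intro j _
    by_cases hj : n = j
    · subst hj
      rw [if_pos hn, if_pos rfl]
    · rw [if_neg (fun hc => hj ((hdiveq n j).mp (hn.symm.trans hc))), if_neg hj]
  rw [Finset.sum_congr rfl e, sum_ind_range k n (ℳ.pi s)]
  by_cases hnk : n ≤ k
  · rw [if_pos (show s 1 m ≤ (k:ℝ)/(ℳ.N:ℝ) by rw [hn]; exact (hdivle n k).mpr hnk),
      if_pos hnk]
  · rw [if_neg (fun hc => hnk ((hdivle n k).mp (hn ▸ hc))), if_neg hnk]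

/-- Sum of exceptional masses is dominated. -/
lemma ek_sum_le {m : ℕ} (hm2 : 2 ≤ m) (hmM : m ≤ ℳ.M) (L' : ℝ) (k : ℕ) :
    ∑ j ∈ Finset.range (k+1),
        ℳ.prob (fun s => s 1 m = (j:ℝ)/(ℳ.N:ℝ) ∧ s 1 (m-1) < L')
      ≤ ℳ.prob (fun s => s 1 (m-1) < L') := by
  classical
  have hN0 : 0 < ℳ.N := by have := ℳ.hN; omega
  have hNR : (0:ℝ) < (ℳ.N:ℝ) := by exact_mod_cast hN0
  have hmIcc : m ∈ Finset.Icc 1 ℳ.M := Finset.mem_Icc.mpr ⟨by omega, hmM⟩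
  have hdiveq : ∀ a b : ℕ, ((a:ℝ)/(ℳ.N:ℝ) = (b:ℝ)/(ℳ.N:ℝ)) ↔ a = b := by
    intro a b
    constructor
    · intro h
      field_simp at h
      exact_mod_cast h
    · rintro rfl; rfl
  simp only [LBModel.prob]
  rw [Finset.sum_comm]
  refine Finset.sum_le_sum (fun s hs => ?_)
  obtain ⟨n, hn⟩ := canon_grid ((ℳ.hSS s).mp hs) hmIcc 1 le_rfl
  by_cases hY : s 1 (m-1) < L'
  · rw [if_pos hY]
    by_cases hnk : n ≤ k
    · refine le_of_eq ((Finset.sum_eq_single_of_mem n (Finset.mem_range.mpr (by omega))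
        ?_).trans ?_)
      · intro b _ hbn
        exact if_neg (fun hc => hbn ((hdiveq n b).mp (hn ▸ hc.1)).symm)
      · exact if_pos ⟨hn, hY⟩
    · refine le_trans (le_of_eq (Finset.sum_eq_zero (fun j hj => if_neg (fun hc => ?_))))
        (ℳ.hpi0 s hs)
      have hnj := (hdiveq n j).mp (hn ▸ hc.1)
      rw [Finset.mem_range] at hj
      omega
  · rw [if_neg hY]
    refine le_of_eq (Finset.sum_eq_zero (fun j _ => if_neg (fun hc => hY hc.2)))

end AuxRec

set_option maxHeartbeats 1000000 in
/-- **Lemma (iterative lower bound propagation across phases).** -/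
theorem lem_iter_lower_bound (ℳ : LBModel) (m : ℕ) (hm2 : 2 ≤ m) (hmM : m ≤ ℳ.M)
    (hΔ : ℳ.Del ≤ ℳ.Cc)
    (L' ε : ℝ) (hL0 : 0 ≤ L') (hL1 : L' ≤ 1) (hε : 0 ≤ ε)
    (h : ℳ.prob (fun s => s 1 (m - 1) < L') ≤ ε) :
    ℳ.prob (fun s =>
        s 1 m < coxV ℳ.μ ℳ.p m / coxV ℳ.μ ℳ.p (m - 1) * L'
          - 5 * coxV ℳ.μ ℳ.p m / ℳ.Cc * ℳ.Del)
      ≤ Real.exp (-(coxV ℳ.μ ℳ.p m) ^ 2 * (Real.log ℳ.N) ^ 2 / ℳ.Cc ^ 2)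
        + (ℳ.Cc / (coxV ℳ.μ ℳ.p m * ℳ.Del) + 1) * ε := by
  classical
  have hN2 : 2 ≤ ℳ.N := ℳ.hN
  have hN0 : 0 < ℳ.N := by omega
  have hNR : (0:ℝ) < (ℳ.N:ℝ) := by exact_mod_cast hN0
  have hN2R : (2:ℝ) ≤ (ℳ.N:ℝ) := by exact_mod_cast hN2
  set v := coxV ℳ.μ ℳ.p m with hvdef
  set v' := coxV ℳ.μ ℳ.p (m-1) with hv'def
  set C := ℳ.Cc with hCdef
  set Δ := ℳ.Del with hΔdef
  clear_value v v' C Δ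
  have hmIcc : m ∈ Finset.Icc 1 ℳ.M := Finset.mem_Icc.mpr ⟨by omega, hmM⟩
  have hm1Icc : m - 1 ∈ Finset.Icc 1 ℳ.M := Finset.mem_Icc.mpr ⟨by omega, by omega⟩
  have hlog : 0 < Real.log (ℳ.N:ℝ) := Real.log_pos (by linarith only [hN2R])
  have hsq : 0 < Real.sqrt (ℳ.N:ℝ) := Real.sqrt_pos.mpr hNR
  have hΔ0 : 0 < Δ := by rw [hΔdef, LBModel.Del]; exact div_pos hlog hsq
  have hC0 : 0 < C := lt_of_lt_of_le hΔ0 hΔ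
  have hξ0 : 0 < ℳ.xi := ℳ.hxi0
  have hξ1 : ℳ.xi < 1 := ℳ.hxi1
  have hLg : 0 < Real.log (1/ℳ.xi) := Real.log_pos (by rw [lt_div_iff₀ hξ0, one_mul]; exact hξ1)
  have hMR : (2:ℝ) ≤ (ℳ.M:ℝ) := by exact_mod_cast (le_trans hm2 hmM)
  have hden : 0 < 3*(ℳ.M:ℝ) + (3*(ℳ.M:ℝ)+4)*Real.log (1/ℳ.xi) := by
    have h1 : (0:ℝ) < (3*(ℳ.M:ℝ)+4) * Real.log (1/ℳ.xi) :=
      mul_pos (by linarith only [hMR]) hLg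
    linarith only [h1, hMR]
  have hCsq : C^2 = 2*ℳ.vbar^2*Real.log (1/ℳ.xi)
      / (3*(ℳ.M:ℝ) + (3*(ℳ.M:ℝ)+4)*Real.log (1/ℳ.xi)) := by
    rw [hCdef, LBModel.Cc]
    exact Real.sq_sqrt (div_nonneg
      (mul_nonneg (mul_nonneg (by norm_num) (sq_nonneg _)) hLg.le) hden.le)
  have hvbar2 : 0 < ℳ.vbar^2 := by
    by_contra hcon
    push_neg at hcon
    have h0 : ℳ.vbar^2 = 0 := le_antisymm hcon (sq_nonneg _)
    have hC2 : C^2 = 0 := by rw [hCsq, h0]; simp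
    linarith only [pow_pos hC0 2, hC2]
  have hvbar0 : 0 ≤ ℳ.vbar := by
    rw [LBModel.vbar]
    exact Finset.le_inf' _ (coxV ℳ.μ ℳ.p) (fun b hb => coxV_nonneg ℳ hb)
  have hvbar : 0 < ℳ.vbar := lt_of_le_of_ne hvbar0 (by
    intro hcon
    rw [← hcon] at hvbar2
    simp at hvbar2)
  have hvbarv : ℳ.vbar ≤ v := by rw [LBModel.vbar, hvdef]; exact Finset.inf'_le _ hmIcc
  have hvbarv' : ℳ.vbar ≤ v' := by rw [LBModel.vbar, hv'def]; exact Finset.inf'_le _ hm1Icc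
  have hv : 0 < v := lt_of_lt_of_le hvbar hvbarv
  have hv' : 0 < v' := lt_of_lt_of_le hvbar hvbarv'
  have hCsq5 : 5 * C^2 ≤ v^2 := by
    rw [hCsq, mul_div_assoc', div_le_iff₀ hden]
    have h1 : ℳ.vbar^2 ≤ v^2 := pow_le_pow_left₀ hvbar0 hvbarv 2
    linarith only [mul_le_mul_of_nonneg_right h1 hLg.le,
      mul_nonneg (sq_nonneg v) hLg.le,
      mul_nonneg (mul_nonneg (sq_nonneg v) hLg.le)
        (by linarith only [hMR] : (0:ℝ) ≤ 3*(ℳ.M:ℝ) - 6),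
      mul_nonneg (sq_nonneg v) (by linarith only [hMR] : (0:ℝ) ≤ 3*(ℳ.M:ℝ))]
  have h2C : 2*C ≤ v := by
    have hsq2 : (2*C)^2 ≤ v^2 := by
      have : (2*C)^2 = 4*C^2 := by ring
      linarith only [hCsq5, sq_nonneg C, this]
    exact (pow_le_pow_iff_left₀ (by positivity) hv.le (by norm_num)).mp hsq2
  have hs2 : Real.sqrt 2 ≤ Real.sqrt (ℳ.N:ℝ) := Real.sqrt_le_sqrt hN2R
  have hs2' : (1.41:ℝ) ≤ Real.sqrt 2 := by
    rw [show (1.41:ℝ) = Real.sqrt (1.41^2) from (Real.sqrt_sq (by norm_num)).symm]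
    exact Real.sqrt_le_sqrt (by norm_num)
  have hlog2 : (0.69:ℝ) ≤ Real.log 2 := by
    have := Real.log_two_gt_d9
    linarith only [this]
  have hlogN2 : Real.log 2 ≤ Real.log (ℳ.N:ℝ) := Real.log_le_log (by norm_num) hN2R
  have hWlow : (0.9:ℝ) ≤ Real.sqrt (ℳ.N:ℝ) * Real.log (ℳ.N:ℝ) := by
    have h1 : Real.sqrt 2 * Real.log 2 ≤ Real.sqrt (ℳ.N:ℝ) * Real.log (ℳ.N:ℝ) :=
      mul_le_mul hs2 hlogN2 (by linarith only [hlog2]) (Real.sqrt_nonneg _)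
    have h2 : (1.41:ℝ) * 0.69 ≤ Real.sqrt 2 * Real.log 2 :=
      mul_le_mul hs2' hlog2 (by norm_num) (Real.sqrt_nonneg 2)
    linarith only [h1, h2]
  have hΔN : Δ * (ℳ.N:ℝ) = Real.sqrt (ℳ.N:ℝ) * Real.log (ℳ.N:ℝ) := by
    rw [hΔdef, LBModel.Del]
    rw [div_mul_eq_mul_div, eq_comm, eq_div_iff (ne_of_gt hsq)]
    linear_combination Real.log (ℳ.N:ℝ) * Real.mul_self_sqrt hNR.le
  set u := v / v' with hu
  have hu0 : 0 < u := by rw [hu]; positivity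
  clear_value u
  set δ := 5 * v / C * Δ with hδdef
  have hδ0 : 0 < δ := by rw [hδdef]; positivity
  clear_value δ
  have hvC10 : (10:ℝ) ≤ 5*v/C := by rw [le_div_iff₀ hC0]; linarith only [h2C, hC0]
  have hW : (9:ℝ) ≤ (ℳ.N:ℝ) * δ := by
    have h1 : (ℳ.N:ℝ)*δ = (5*v/C) * (Δ * (ℳ.N:ℝ)) := by rw [hδdef]; ring
    rw [h1, hΔN]
    have h2 : (10:ℝ) * 0.9 ≤ (5*v/C) * (Real.sqrt (ℳ.N:ℝ) * Real.log (ℳ.N:ℝ)) :=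
      mul_le_mul hvC10 hWlow (by norm_num) (by linarith only [hvC10])
    linarith only [h2]
  have hcoef : C / (v * Δ) = 5 / δ := by
    rw [hδdef]
    field_simp
  have hcoef0 : (0:ℝ) ≤ C / (v*Δ) := by positivity
  have hexp_eq : -v^2 * Real.log (ℳ.N:ℝ)^2 / C^2 = -((ℳ.N:ℝ)*δ*δ/25) := by
    have hNΔ2 : (ℳ.N:ℝ) * Δ^2 = Real.log (ℳ.N:ℝ)^2 := by
      rw [hΔdef, LBModel.Del, div_pow, Real.sq_sqrt hNR.le]
      field_simp
    have h1 : (ℳ.N:ℝ)*(5*v/C*Δ)*(5*v/C*Δ)/25 = v^2*((ℳ.N:ℝ)*Δ^2)/C^2 := by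
      field_simp
      ring
    rw [hδdef, h1, hNΔ2]
    ring
  -- flow balance facts
  set Pm1 := ℳ.prob (fun s => s 1 (m-1) < L') with hPm1def
  have hPm10 : 0 ≤ Pm1 := by rw [hPm1def]; exact prob_nonneg ℳ _
  clear_value Pm1
  have hμm : 0 < ℳ.μ m := ℳ.hμ m hmIcc
  have hβ0 : 0 ≤ ℳ.p (m-1) * ℳ.μ (m-1) :=
    mul_nonneg (ℳ.hp0 _ hm1Icc) (ℳ.hμ _ hm1Icc).le
  have hβv : ℳ.p (m-1) * ℳ.μ (m-1) * v' = ℳ.μ m * v := by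
    rw [hvdef, hv'def]; exact coxV_ratio ℳ hm2 hmM
  have hβeq : ℳ.p (m-1) * ℳ.μ (m-1) = ℳ.μ m * u := by
    rw [hu]
    field_simp
    linear_combination hβv
  have hEX1 : (∑ s ∈ ℳ.SS, ℳ.pi s * s 1 m) ≤ 1 := by
    rw [← ℳ.hpi1]
    refine Finset.sum_le_sum (fun s hs => ?_)
    have h1 : s 1 m ≤ 1 := ((ℳ.hSS s).mp hs).1 m hmIcc
    have h2 := ℳ.hpi0 s hs
    have h3 := mul_le_mul_of_nonneg_left h1 h2
    linarith only [h3]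
  have hEY_lb : L' * (1 - Pm1) ≤ ∑ s ∈ ℳ.SS, ℳ.pi s * s 1 (m-1) := by
    have h1 : ∀ s ∈ ℳ.SS, ℳ.pi s * (L' * (if ¬ (s 1 (m-1) < L') then 1 else 0))
        ≤ ℳ.pi s * s 1 (m-1) := by
      intro s hs
      have hY0 := canon_nonneg ((ℳ.hSS s).mp hs) 1 (m-1)
      have hpi := ℳ.hpi0 s hs
      by_cases hc : s 1 (m-1) < L'
      · rw [if_neg (not_not.mpr hc)]
        have := mul_nonneg hpi hY0
        linarith only [this]
      · rw [if_pos hc]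
        push_neg at hc
        have := mul_le_mul_of_nonneg_left hc hpi
        linarith only [this]
    have h2 := Finset.sum_le_sum h1
    have h3 : ∑ s ∈ ℳ.SS, ℳ.pi s * (L' * (if ¬ (s 1 (m-1) < L') then 1 else 0))
        = L' * (1 - Pm1) := by
      rw [hPm1def, ← prob_compl ℳ (fun s => s 1 (m-1) < L'),
        ← prob_eq_ind ℳ (fun s => ¬ (s 1 (m-1) < L')), Finset.mul_sum]
      exact Finset.sum_congr rfl (fun s _ => by ring)
    rw [h3] at h2
    exact h2
  have hfb : ℳ.p (m-1) * ℳ.μ (m-1) * (∑ s ∈ ℳ.SS, ℳ.pi s * s 1 (m-1))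
      = ℳ.μ m * (∑ s ∈ ℳ.SS, ℳ.pi s * s 1 m) := flow_balance ℳ hm2 hmM
  have hEY0 : 0 ≤ ∑ s ∈ ℳ.SS, ℳ.pi s * s 1 (m-1) :=
    Finset.sum_nonneg (fun s hs =>
      mul_nonneg (ℳ.hpi0 s hs) (canon_nonneg ((ℳ.hSS s).mp hs) 1 (m-1)))
  have hux : u * L' * (1 - Pm1) ≤ 1 := by
    have h5a : ℳ.μ m * (u * L' * (1 - Pm1)) ≤ ℳ.μ m * 1 := by
      calc ℳ.μ m * (u * L' * (1 - Pm1))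
          = (ℳ.p (m-1) * ℳ.μ (m-1)) * (L' * (1 - Pm1)) := by rw [hβeq]; ring
        _ ≤ (ℳ.p (m-1) * ℳ.μ (m-1)) * (∑ s ∈ ℳ.SS, ℳ.pi s * s 1 (m-1)) :=
            mul_le_mul_of_nonneg_left hEY_lb hβ0
        _ = ℳ.μ m * (∑ s ∈ ℳ.SS, ℳ.pi s * s 1 m) := hfb
        _ ≤ ℳ.μ m * 1 := mul_le_mul_of_nonneg_left hEX1 hμm.le
    exact le_of_mul_le_mul_left h5a hμm
  set T0 := u * L' - δ with hT0def
  clear_value T0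
  have hexp_pos := Real.exp_pos (-v^2 * Real.log (ℳ.N:ℝ)^2 / C^2)
  by_cases hT0 : T0 ≤ 0
  · have hzero : ℳ.prob (fun s => s 1 m < T0) = 0 :=
      prob_empty ℳ (fun s hs hlt => absurd hlt
        (not_lt.mpr (le_trans hT0 (canon_nonneg ((ℳ.hSS s).mp hs) 1 m))))
    rw [hzero]
    have h1 : (0:ℝ) ≤ (C/(v*Δ) + 1) * ε := mul_nonneg (by linarith only [hcoef0]) hε
    linarith only [h1, hexp_pos]
  push_neg at hT0
  have hδuL : δ < u * L' := by rw [hT0def] at hT0; linarith only [hT0]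
  have huL0 : 0 < u * L' := lt_trans hδ0 hδuL
  by_cases hε27 : 2/7 ≤ ε
  · -- large ε: right side exceeds 1
    have hone : (1:ℝ) ≤ (C/(v*Δ) + 1) * ε := by
      by_cases hε1 : 1 ≤ ε
      · have h1 : (1:ℝ) * ε ≤ (C/(v*Δ)+1) * ε :=
          mul_le_mul_of_nonneg_right (by linarith only [hcoef0]) (by linarith only [hε])
        linarith only [h1, hε1]
      · push_neg at hε1
        have h6 : u*L'*(1-ε) ≤ 1 := by
          have h6a : u*L'*(1-ε) ≤ u*L'*(1-Pm1) :=
            mul_le_mul_of_nonneg_left (by linarith only [h]) huL0.le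
          linarith only [hux, h6a]
        have h7 : δ*(1-ε) ≤ 1 := by
          have := mul_le_mul_of_nonneg_right hδuL.le
            (by linarith only [hε1] : (0:ℝ) ≤ 1-ε)
          linarith only [this, h6]
        rw [hcoef, div_add' _ _ _ (ne_of_gt hδ0), div_mul_eq_mul_div, le_div_iff₀ hδ0]
        linarith only [h7, hε27]
    have hple := prob_le_one ℳ (fun s => s 1 m < T0)
    linarith only [hone, hple, hexp_pos]
  push_neg at hε27
  -- main case
  have huL75 : u * L' ≤ 7/5 := by
    have h6a : u*L'*(5/7) ≤ u*L'*(1-Pm1) :=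
      mul_le_mul_of_nonneg_left (by linarith only [h, hε27]) huL0.le
    linarith only [hux, h6a]
  set S := (ℳ.N:ℝ) * (u * L') with hSdef
  have hS0 : 0 < S := by rw [hSdef]; exact mul_pos hNR huL0
  clear_value S
  have hS75 : S ≤ 7/5*(ℳ.N:ℝ) := by
    rw [hSdef]
    have := mul_le_mul_of_nonneg_left huL75 hNR.le
    linarith only [this]
  set T := u * L' - δ/2 with hTdef
  clear_value T
  have hTT0 : T0 < T := by rw [hTdef, hT0def]; linarith only [hδ0]
  have hTpos : 0 < T := lt_trans hT0 hTT0
  set K := ⌈(ℳ.N:ℝ) * T⌉₊ with hKdef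
  have hNT0 : 0 < (ℳ.N:ℝ)*T := mul_pos hNR hTpos
  have hKge : (ℳ.N:ℝ)*T ≤ (K:ℝ) := by rw [hKdef]; exact Nat.le_ceil _
  have hKlt : (K:ℝ) < (ℳ.N:ℝ)*T + 1 := by rw [hKdef]; exact Nat.ceil_lt_add_one hNT0.le
  clear_value K
  have hK0 : (0:ℝ) < (K:ℝ) := lt_of_lt_of_le hNT0 hKge
  have haK : (ℳ.N:ℝ)*δ/2 - 1 ≤ S - (K:ℝ) := by
    have h8 : S = (ℳ.N:ℝ)*T + (ℳ.N:ℝ)*δ/2 := by rw [hSdef, hTdef]; ring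
    rw [h8]
    linarith only [hKlt]
  have ha0 : 0 < S - (K:ℝ) := by linarith only [haK, hW]
  set y := (K:ℝ) / S with hydef
  have hy0 : 0 < y := by rw [hydef]; exact div_pos hK0 hS0
  have hy1 : y < 1 := by rw [hydef]; exact (div_lt_one hS0).mpr (by linarith only [haK, hW])
  clear_value y
  have h32 : 1 - y = (S - (K:ℝ))/S := by
    rw [hydef]
    field_simp
  -- one-step recursion
  have hstep : ∀ k : ℕ, k + 1 ≤ K →
      ℳ.prob (fun s => s 1 m = (k:ℝ)/(ℳ.N:ℝ))
        - ℳ.prob (fun s => s 1 m = (k:ℝ)/(ℳ.N:ℝ) ∧ s 1 (m-1) < L')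
      ≤ y * ℳ.prob (fun s => s 1 m = (((k+1):ℕ):ℝ)/(ℳ.N:ℝ)) := by
    intro k hkK
    have hbase := level_ineq ℳ hm2 hmM (hv'def ▸ hv') L' hL0 k
    rw [← hvdef, ← hv'def, ← hu] at hbase
    have hcast : (((k+1):ℕ):ℝ) = (k:ℝ) + 1 := by push_cast; ring
    rw [hcast]
    have h10 : ℳ.μ m * (u * L' * (ℳ.prob (fun s => s 1 m = (k:ℝ)/(ℳ.N:ℝ))
          - ℳ.prob (fun s => s 1 m = (k:ℝ)/(ℳ.N:ℝ) ∧ s 1 (m-1) < L')))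
        ≤ ℳ.μ m * (((k:ℝ)+1)/(ℳ.N:ℝ)
            * ℳ.prob (fun s => s 1 m = ((k:ℝ)+1)/(ℳ.N:ℝ))) := by
      calc ℳ.μ m * (u * L' * (ℳ.prob (fun s => s 1 m = (k:ℝ)/(ℳ.N:ℝ))
              - ℳ.prob (fun s => s 1 m = (k:ℝ)/(ℳ.N:ℝ) ∧ s 1 (m-1) < L')))
          = ℳ.μ m * u * L' * (ℳ.prob (fun s => s 1 m = (k:ℝ)/(ℳ.N:ℝ))
              - ℳ.prob (fun s => s 1 m = (k:ℝ)/(ℳ.N:ℝ) ∧ s 1 (m-1) < L')) := by ring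
        _ ≤ ℳ.μ m * (((k:ℝ)+1)/(ℳ.N:ℝ))
              * ℳ.prob (fun s => s 1 m = ((k:ℝ)+1)/(ℳ.N:ℝ)) := hbase
        _ = ℳ.μ m * (((k:ℝ)+1)/(ℳ.N:ℝ)
              * ℳ.prob (fun s => s 1 m = ((k:ℝ)+1)/(ℳ.N:ℝ))) := by ring
    have h9 := le_of_mul_le_mul_left h10 hμm
    have hpk0 : 0 ≤ ℳ.prob (fun s => s 1 m = ((k:ℝ)+1)/(ℳ.N:ℝ)) := prob_nonneg ℳ _
    have h13 : ((k:ℝ)+1)/(ℳ.N:ℝ) * ℳ.prob (fun s => s 1 m = ((k:ℝ)+1)/(ℳ.N:ℝ))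
        ≤ (K:ℝ)/(ℳ.N:ℝ) * ℳ.prob (fun s => s 1 m = ((k:ℝ)+1)/(ℳ.N:ℝ)) := by
      have hkK' : ((k:ℝ)+1) ≤ (K:ℝ) := by exact_mod_cast hkK
      have : ((k:ℝ)+1)/(ℳ.N:ℝ) ≤ (K:ℝ)/(ℳ.N:ℝ) := by gcongr
      exact mul_le_mul_of_nonneg_right this hpk0
    have h14 : (K:ℝ)/(ℳ.N:ℝ) = y * (u*L') := by
      rw [hydef, hSdef]
      have hL'ne : L' ≠ 0 := right_ne_zero_of_mul huL0.ne'
      field_simp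
    have h15 : u*L'*(ℳ.prob (fun s => s 1 m = (k:ℝ)/(ℳ.N:ℝ))
          - ℳ.prob (fun s => s 1 m = (k:ℝ)/(ℳ.N:ℝ) ∧ s 1 (m-1) < L'))
        ≤ u*L'*(y * ℳ.prob (fun s => s 1 m = ((k:ℝ)+1)/(ℳ.N:ℝ))) := by
      calc u*L'*(ℳ.prob (fun s => s 1 m = (k:ℝ)/(ℳ.N:ℝ))
              - ℳ.prob (fun s => s 1 m = (k:ℝ)/(ℳ.N:ℝ) ∧ s 1 (m-1) < L'))
          ≤ ((k:ℝ)+1)/(ℳ.N:ℝ) * ℳ.prob (fun s => s 1 m = ((k:ℝ)+1)/(ℳ.N:ℝ)) := h9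
        _ ≤ (K:ℝ)/(ℳ.N:ℝ) * ℳ.prob (fun s => s 1 m = ((k:ℝ)+1)/(ℳ.N:ℝ)) := h13
        _ = u*L'*(y * ℳ.prob (fun s => s 1 m = ((k:ℝ)+1)/(ℳ.N:ℝ))) := by
            rw [h14]; ring
    exact le_of_mul_le_mul_left h15 huL0
  -- cumulative recursion
  have hGstep : ∀ k : ℕ, k + 1 ≤ K →
      ℳ.prob (fun s => s 1 m ≤ (k:ℝ)/(ℳ.N:ℝ))
        ≤ y * ℳ.prob (fun s => s 1 m ≤ (((k+1):ℕ):ℝ)/(ℳ.N:ℝ)) + ε := by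
    intro k hkK
    have heps : ∑ i ∈ Finset.range (k+1),
        ℳ.prob (fun s => s 1 m = (i:ℝ)/(ℳ.N:ℝ) ∧ s 1 (m-1) < L') ≤ ε :=
      le_trans (ek_sum_le ℳ hm2 hmM L' k) (le_trans (le_of_eq hPm1def.symm) h)
    have h16 : ∑ i ∈ Finset.range (k+1),
        ℳ.prob (fun s => s 1 m = (((i+1):ℕ):ℝ)/(ℳ.N:ℝ))
        ≤ ℳ.prob (fun s => s 1 m ≤ (((k+1):ℕ):ℝ)/(ℳ.N:ℝ)) := by
      rw [G_eq_sum ℳ hm2 hmM (k+1), Finset.sum_range_succ'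
        (fun i => ℳ.prob (fun s => s 1 m = (i:ℝ)/(ℳ.N:ℝ))) (k+1)]
      have h0 : (0:ℝ) ≤ ℳ.prob (fun s => s 1 m = ((0:ℕ):ℝ)/(ℳ.N:ℝ)) := prob_nonneg ℳ _
      exact le_add_of_nonneg_right h0
    have h17 : ℳ.prob (fun s => s 1 m ≤ (k:ℝ)/(ℳ.N:ℝ)) - ε
        ≤ y * ℳ.prob (fun s => s 1 m ≤ (((k+1):ℕ):ℝ)/(ℳ.N:ℝ)) := by
      have h18 : ℳ.prob (fun s => s 1 m ≤ (k:ℝ)/(ℳ.N:ℝ)) - ε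
          ≤ ∑ i ∈ Finset.range (k+1),
              (ℳ.prob (fun s => s 1 m = (i:ℝ)/(ℳ.N:ℝ))
                - ℳ.prob (fun s => s 1 m = (i:ℝ)/(ℳ.N:ℝ) ∧ s 1 (m-1) < L')) := by
        rw [G_eq_sum ℳ hm2 hmM k, Finset.sum_sub_distrib]
        linarith only [heps]
      have h19 : ∑ i ∈ Finset.range (k+1),
          (ℳ.prob (fun s => s 1 m = (i:ℝ)/(ℳ.N:ℝ))
            - ℳ.prob (fun s => s 1 m = (i:ℝ)/(ℳ.N:ℝ) ∧ s 1 (m-1) < L'))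
          ≤ ∑ i ∈ Finset.range (k+1),
              y * ℳ.prob (fun s => s 1 m = (((i+1):ℕ):ℝ)/(ℳ.N:ℝ)) := by
        refine Finset.sum_le_sum (fun i hi => ?_)
        rw [Finset.mem_range] at hi
        exact hstep i (by omega)
      have h20 : ∑ i ∈ Finset.range (k+1),
          y * ℳ.prob (fun s => s 1 m = (((i+1):ℕ):ℝ)/(ℳ.N:ℝ))
          ≤ y * ℳ.prob (fun s => s 1 m ≤ (((k+1):ℕ):ℝ)/(ℳ.N:ℝ)) := by
        rw [← Finset.mul_sum]
        exact mul_le_mul_of_nonneg_left h16 hy0.le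
      linarith only [h18, h19, h20]
    linarith only [h17]
  -- iteration
  have hiter : ∀ jj : ℕ, ∀ k : ℕ, k + jj ≤ K →
      ℳ.prob (fun s => s 1 m ≤ (k:ℝ)/(ℳ.N:ℝ))
        ≤ y^jj * ℳ.prob (fun s => s 1 m ≤ (((k+jj):ℕ):ℝ)/(ℳ.N:ℝ))
          + ε * ∑ i ∈ Finset.range jj, y^i := by
    intro jj
    induction jj with
    | zero =>
      intro k _
      simp
    | succ jj ih =>
      intro k hk
      have h19 := hGstep k (by omega)
      have h20 := ih (k+1) (by omega)
      have h21 := mul_le_mul_of_nonneg_left h20 hy0.le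
      have h22 : k + 1 + jj = k + (jj+1) := by omega
      rw [h22] at h21
      calc ℳ.prob (fun s => s 1 m ≤ (k:ℝ)/(ℳ.N:ℝ))
          ≤ y * ℳ.prob (fun s => s 1 m ≤ (((k+1):ℕ):ℝ)/(ℳ.N:ℝ)) + ε := h19
        _ ≤ y * (y^jj * ℳ.prob (fun s => s 1 m ≤ (((k+(jj+1)):ℕ):ℝ)/(ℳ.N:ℝ))
              + ε * ∑ i ∈ Finset.range jj, y^i) + ε := by linarith only [h21]
        _ = y^(jj+1) * ℳ.prob (fun s => s 1 m ≤ (((k+(jj+1)):ℕ):ℝ)/(ℳ.N:ℝ))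
              + ε * (∑ i ∈ Finset.range jj, y^(i+1) + 1) := by
            have hsum : y * ∑ i ∈ Finset.range jj, y^i
                = ∑ i ∈ Finset.range jj, y^(i+1) := by
              rw [Finset.mul_sum]
              exact Finset.sum_congr rfl (fun i _ => by rw [pow_succ]; ring)
            rw [← hsum]
            ring
        _ = y^(jj+1) * ℳ.prob (fun s => s 1 m ≤ (((k+(jj+1)):ℕ):ℝ)/(ℳ.N:ℝ))
              + ε * ∑ i ∈ Finset.range (jj+1), y^i := by
            rw [Finset.sum_range_succ' (fun i => y^i) jj, pow_zero]
  -- indices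
  set k0 := ⌈(ℳ.N:ℝ)*T0⌉₊ - 1 with hk0def
  have hNT00 : 0 < (ℳ.N:ℝ)*T0 := mul_pos hNR hT0
  have hceil1 : 1 ≤ ⌈(ℳ.N:ℝ)*T0⌉₊ := by
    have := Nat.ceil_pos.mpr hNT00
    omega
  have hk0lt : (k0:ℝ) < (ℳ.N:ℝ)*T0 := by
    have h23 : (⌈(ℳ.N:ℝ)*T0⌉₊:ℝ) < (ℳ.N:ℝ)*T0 + 1 := Nat.ceil_lt_add_one hNT00.le
    have h24 : (k0:ℝ) = (⌈(ℳ.N:ℝ)*T0⌉₊:ℝ) - 1 := by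
      rw [hk0def, Nat.cast_sub hceil1]
      norm_num
    linarith only [h23, h24]
  have hk0K : k0 ≤ K := by
    have h25 : (k0:ℝ) < (K:ℝ) := by
      have : (ℳ.N:ℝ)*T0 ≤ (ℳ.N:ℝ)*T := mul_le_mul_of_nonneg_left hTT0.le hNR.le
      linarith only [hk0lt, this, hKge]
    have : k0 < K := by exact_mod_cast h25
    omega
  set j := K - k0 with hjdef
  have hjcast : (j:ℝ) = (K:ℝ) - (k0:ℝ) := by
    rw [hjdef, Nat.cast_sub hk0K]
  have hjlb : (ℳ.N:ℝ)*δ/2 ≤ (j:ℝ) := by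
    have h25 : (ℳ.N:ℝ)*T - (ℳ.N:ℝ)*T0 = (ℳ.N:ℝ)*δ/2 := by rw [hTdef, hT0def]; ring
    rw [hjcast]
    linarith only [h25, hKge, hk0lt]
  -- event inclusion
  have hincl : ℳ.prob (fun s => s 1 m < T0)
      ≤ ℳ.prob (fun s => s 1 m ≤ (k0:ℝ)/(ℳ.N:ℝ)) := by
    refine prob_mono ℳ (fun s hs hlt => ?_)
    obtain ⟨n, hn⟩ := canon_grid ((ℳ.hSS s).mp hs) hmIcc 1 le_rfl
    rw [hn] at hlt ⊢
    have h26 : (n:ℝ) < (ℳ.N:ℝ)*T0 := by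
      rw [div_lt_iff₀ hNR] at hlt
      linarith only [hlt]
    have h27 : n < ⌈(ℳ.N:ℝ)*T0⌉₊ := Nat.lt_ceil.mpr h26
    have h28 : n ≤ k0 := by omega
    rw [div_le_div_iff_of_pos_right hNR]
    exact_mod_cast h28
  have h29 := hiter j k0 (by omega)
  have hk0j : k0 + j = K := by omega
  rw [hk0j] at h29
  have hGK1 : ℳ.prob (fun s => s 1 m ≤ ((K:ℕ):ℝ)/(ℳ.N:ℝ)) ≤ 1 := prob_le_one ℳ _
  -- geometric sum bound
  have hgeom : ∑ i ∈ Finset.range j, y^i ≤ 1/(1-y) := by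
    have h30 := geom_sum_mul y j
    have h31 : (∑ i ∈ Finset.range j, y^i) * (1 - y) = 1 - y^j := by
      have h31a : (∑ i ∈ Finset.range j, y^i) * (1 - y)
          = -((∑ i ∈ Finset.range j, y^i) * (y - 1)) := by ring
      rw [h31a, h30]
      ring
    rw [le_div_iff₀ (by linarith only [hy1] : (0:ℝ) < 1 - y)]
    linarith only [pow_nonneg hy0.le j, h31]
  -- exponential bound
  have hyle : y ≤ Real.exp (y - 1) := by
    have := Real.add_one_le_exp (y - 1)
    linarith only [this]
  have hpow : y^j ≤ Real.exp ((j:ℝ) * (y-1)) := by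
    calc y^j ≤ (Real.exp (y-1))^j := pow_le_pow_left₀ hy0.le hyle j
      _ = Real.exp ((j:ℝ)*(y-1)) := (Real.exp_nat_mul (y-1) j).symm
  have hexpcmp : (j:ℝ) * (y - 1) ≤ -((ℳ.N:ℝ)*δ*δ/25) := by
    have h33 : (ℳ.N:ℝ)*δ*δ/25 ≤ (j:ℝ) * ((S - (K:ℝ))/S) := by
      rw [mul_div_assoc', le_div_iff₀ hS0]
      have hprod : ((ℳ.N:ℝ)*δ/2) * ((ℳ.N:ℝ)*δ/2 - 1) ≤ (j:ℝ) * (S - (K:ℝ)) :=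
        mul_le_mul hjlb haK (by linarith only [hW]) (by linarith only [hjlb, hW])
      have hlhs : (ℳ.N:ℝ)*δ*δ/25 * S ≤ (ℳ.N:ℝ)*δ*δ/25 * (7/5*(ℳ.N:ℝ)) :=
        mul_le_mul_of_nonneg_left hS75 (by positivity)
      have hw0 : (0:ℝ) ≤ (ℳ.N:ℝ)*δ := by positivity
      have hww : 9*((ℳ.N:ℝ)*δ) ≤ ((ℳ.N:ℝ)*δ)*((ℳ.N:ℝ)*δ) :=
        mul_le_mul_of_nonneg_right hW hw0
      linarith only [hprod, hlhs, hww, hw0]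
    have h34 : y - 1 = -((S - (K:ℝ))/S) := by rw [← h32]; ring
    rw [h34]
    have h34b : (j:ℝ) * -((S - (K:ℝ))/S) = -((j:ℝ) * ((S - (K:ℝ))/S)) := by ring
    rw [h34b]
    linarith only [h33]
  have hfin1 : y^j ≤ Real.exp (-v^2 * Real.log (ℳ.N:ℝ)^2 / C^2) := by
    refine le_trans hpow (Real.exp_le_exp.mpr ?_)
    rw [hexp_eq]
    exact hexpcmp
  have hfin2 : ε * (1/(1-y)) ≤ C/(v*Δ) * ε := by
    rw [hcoef]
    have h35 : 1/(1-y) ≤ 5/δ := by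
      rw [h32, one_div_div, div_le_div_iff₀ ha0 hδ0]
      linarith only [mul_le_mul_of_nonneg_right hS75 hδ0.le, haK, hW]
    calc ε * (1/(1-y)) ≤ ε * (5/δ) := mul_le_mul_of_nonneg_left h35 hε
      _ = 5/δ * ε := by ring
  -- assemble
  calc ℳ.prob (fun s => s 1 m < T0)
      ≤ ℳ.prob (fun s => s 1 m ≤ (k0:ℝ)/(ℳ.N:ℝ)) := hincl
    _ ≤ y^j * ℳ.prob (fun s => s 1 m ≤ ((K:ℕ):ℝ)/(ℳ.N:ℝ))
          + ε * ∑ i ∈ Finset.range j, y^i := h29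
    _ ≤ y^j * 1 + ε * (1/(1-y)) := by
        have ha := mul_le_mul_of_nonneg_left hGK1 (pow_nonneg hy0.le j)
        have hb := mul_le_mul_of_nonneg_left hgeom hε
        linarith only [ha, hb]
    _ ≤ Real.exp (-v^2 * Real.log (ℳ.N:ℝ)^2 / C^2) + (C/(v*Δ) + 1) * ε := by
        have h36 : C/(v*Δ)*ε ≤ (C/(v*Δ)+1)*ε := by
          have := mul_le_mul_of_nonneg_right
            (by linarith only [] : C/(v*Δ) ≤ C/(v*Δ)+1) hε
          linarith only [this]
        linarith only [hfin1, hfin2, h36]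
end
end

section
/- Lemma (conditional tail bound for finite-state CTMCs via Lyapunov drift). Suppose there exist a set E ⊆ S and constants B > 0, γ > 0, δ ≥ 0 such that: (i) ∇V(s) ≤ −γ whenever V(s) ≥ B and s ∈ E; and (ii) ∇V(s) ≤ δ whenever V(s) ≥ B and s ∉ E. Then for every j ∈ ℕ, ℙ( V(S) ≥ B + 2·ν_max·j ) ≤ α^j + β·ℙ(S ∉ E), where α = q_max·ν_max/(q_max·ν_max + γ) and β = δ/γ + 1. -/
open Finset
open scoped Classical

private lemma flow_zero {St : Type*} [Fintype St]
    (q : St → St → ℝ) (hqrow : ∀ s, ∑ s', q s s' = 0)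
    (π : St → ℝ) (hstat : ∀ s', ∑ s, π s * q s s' = 0)
    (f : St → ℝ) :
    ∑ s, π s * (∑ s', q s s' * (f s' - f s)) = 0 := by
  have h1 : ∀ s, (∑ s', q s s' * (f s' - f s)) = ∑ s', q s s' * f s' := by
    intro s
    simp only [mul_sub]
    rw [Finset.sum_sub_distrib, ← Finset.sum_mul, hqrow, zero_mul, sub_zero]
  simp only [h1, Finset.mul_sum]
  rw [Finset.sum_comm]
  apply Finset.sum_eq_zero
  intro s' _
  simp_rw [← mul_assoc]
  rw [← Finset.sum_mul, hstat, zero_mul]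

private lemma step_ineq {St : Type*} [Fintype St]
    (q : St → St → ℝ)
    (hq0 : ∀ s s', s ≠ s' → 0 ≤ q s s')
    (hqrow : ∀ s, ∑ s', q s s' = 0)
    (π : St → ℝ) (hπ0 : ∀ s, 0 ≤ π s)
    (hstat : ∀ s', ∑ s, π s * q s s' = 0)
    (V : St → ℝ) (νmax : ℝ) (hν0 : 0 ≤ νmax)
    (hjump : ∀ s s', s ≠ s' → 0 < q s s' → |V s' - V s| ≤ νmax)
    (qmax : ℝ) (hqmax0 : 0 ≤ qmax)
    (hrowb : ∀ s, (∑ s' ∈ Finset.univ.filter (fun t => V s < V t), q s s') ≤ qmax)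
    (E : Set St) (B γ δ : ℝ) (hγ : 0 < γ) (hδ : 0 ≤ δ)
    (hdrift1 : ∀ s, B ≤ V s → s ∈ E →
      (∑ s' ∈ Finset.univ.erase s, q s s' * (V s' - V s)) ≤ -γ)
    (hdrift2 : ∀ s, B ≤ V s → s ∉ E →
      (∑ s' ∈ Finset.univ.erase s, q s s' * (V s' - V s)) ≤ δ)
    (t : ℝ) (hBt : B ≤ t) :
    (γ + qmax * νmax) * (∑ s ∈ Finset.univ.filter (fun s => t ≤ V s), π s)
      ≤ qmax * νmax * (∑ s ∈ Finset.univ.filter (fun s => t - 2 * νmax ≤ V s), π s)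
        + (γ + δ) * (∑ s ∈ Finset.univ.filter (fun s => s ∉ E), π s) := by
  set f : St → ℝ := fun s => max (V s) (t - νmax) with hf
  set D := qmax * νmax with hD
  have hD0 : 0 ≤ D := mul_nonneg hqmax0 hν0
  -- full-sum drift equals erase-sum drift
  have herase : ∀ s, (∑ s', q s s' * (V s' - V s))
      = ∑ s' ∈ Finset.univ.erase s, q s s' * (V s' - V s) := by
    intro s
    exact (Finset.sum_erase _ (by simp)).symm
  -- on A, drift of f equals drift of V
  have hfV : ∀ s, t ≤ V s →
      (∑ s', q s s' * (f s' - f s)) = ∑ s', q s s' * (V s' - V s) := by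
    intro s hs
    apply Finset.sum_congr rfl
    intro s' _
    rcases eq_or_ne s' s with rfl | hne
    · simp
    rcases eq_or_lt_of_le (hq0 s s' hne.symm) with hq | hq
    · rw [← hq]; ring
    · have hj := hjump s s' hne.symm hq
      have h1 : t - νmax ≤ V s' := by
        have := abs_le.mp hj
        linarith [this.1]
      have h2 : t - νmax ≤ V s := by linarith
      simp only [hf, max_eq_left h1, max_eq_left h2]
  -- on A^c, drift of f is small
  have hfbound : ∀ s, ¬ t ≤ V s →
      (∑ s', q s s' * (f s' - f s)) ≤ if t - 2 * νmax < V s then D else 0 := by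
    intro s hs
    split_ifs with hmid
    · calc (∑ s', q s s' * (f s' - f s))
          ≤ ∑ s', (if V s < V s' then q s s' * νmax else 0) := by
            apply Finset.sum_le_sum
            intro s' _
            rcases eq_or_ne s' s with rfl | hne
            · simp
            rcases eq_or_lt_of_le (hq0 s s' hne.symm) with hq | hq
            · rw [← hq]; split_ifs <;> simp
            · split_ifs with hV'
              · have hj := hjump s s' hne.symm hq
                have hd : f s' - f s ≤ νmax := by
                  have h2 : V s ≤ f s := le_max_left _ _
                  have h3 : t - νmax ≤ f s := le_max_right _ _
                  have h4 := (abs_le.mp hj).2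
                  have h5 : f s' ≤ f s + νmax := max_le (by linarith) (by linarith)
                  linarith
                exact mul_le_mul_of_nonneg_left hd (le_of_lt hq)
              · push_neg at hV'
                have : f s' ≤ f s := max_le_max hV' le_rfl
                have := mul_nonpos_of_nonneg_of_nonpos (le_of_lt hq) (by linarith : f s' - f s ≤ 0)
                linarith
        _ = ∑ s' ∈ Finset.univ.filter (fun u => V s < V u), q s s' * νmax := by
            rw [Finset.sum_filter]
        _ = (∑ s' ∈ Finset.univ.filter (fun u => V s < V u), q s s') * νmax := by
            rw [Finset.sum_mul]
        _ ≤ qmax * νmax := mul_le_mul_of_nonneg_right (hrowb s) hν0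
    · apply Finset.sum_nonpos
      intro s' _
      rcases eq_or_ne s' s with rfl | hne
      · simp
      rcases eq_or_lt_of_le (hq0 s s' hne.symm) with hq | hq
      · rw [← hq]; simp
      · have hj := hjump s s' hne.symm hq
        push_neg at hmid
        have h1 : f s' = t - νmax := by
          simp only [hf]
          apply max_eq_right
          have := (abs_le.mp hj).2
          linarith
        have h2 : f s = t - νmax := by
          simp only [hf]
          apply max_eq_right
          linarith
        rw [h1, h2]; simp
  -- flow balance split over A / A^c
  have hflow := flow_zero q hqrow π hstat f
  rw [← Finset.sum_filter_add_sum_filter_not Finset.univ (fun s => t ≤ V s)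
      (fun s => π s * (∑ s', q s s' * (f s' - f s)))] at hflow
  set A := Finset.univ.filter (fun s => t ≤ V s) with hA
  set Ac := Finset.univ.filter (fun s => ¬ t ≤ V s) with hAc
  set M := Ac.filter (fun s => t - 2 * νmax < V s) with hM
  set PA := ∑ s ∈ A, π s with hPA
  set PM := ∑ s ∈ M, π s with hPM
  set Pj := ∑ s ∈ Finset.univ.filter (fun s => t - 2 * νmax ≤ V s), π s with hPj
  set PN := ∑ s ∈ Finset.univ.filter (fun s => s ∉ E), π s with hPN
  set SA := ∑ s ∈ A, π s * (∑ s', q s s' * (f s' - f s)) with hSA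
  set SAc := ∑ s ∈ Ac, π s * (∑ s', q s s' * (f s' - f s)) with hSAc
  -- SAc ≤ D * PM
  have e3 : SAc ≤ D * PM := by
    calc SAc ≤ ∑ s ∈ Ac, π s * (if t - 2 * νmax < V s then D else 0) := by
          apply Finset.sum_le_sum
          intro s hs
          have hsmem : ¬ t ≤ V s := by
            rw [hAc, Finset.mem_filter] at hs; exact hs.2
          exact mul_le_mul_of_nonneg_left (hfbound s hsmem) (hπ0 s)
      _ = D * PM := by
          rw [hPM, hM, Finset.mul_sum]
          conv_rhs => rw [Finset.sum_filter]
          apply Finset.sum_congr rfl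
          intro s _
          split_ifs <;> ring
  -- PM + PA ≤ Pj
  have e4 : PM + PA ≤ Pj := by
    have hdisj : Disjoint M A := by
      rw [Finset.disjoint_left]
      intro s hsM hsA
      rw [hM, hAc, Finset.mem_filter, Finset.mem_filter] at hsM
      rw [hA, Finset.mem_filter] at hsA
      exact hsM.1.2 hsA.2
    have hsub : M ∪ A ⊆ Finset.univ.filter (fun s => t - 2 * νmax ≤ V s) := by
      intro s hs
      rw [Finset.mem_union] at hs
      rw [Finset.mem_filter]
      refine ⟨Finset.mem_univ s, ?_⟩
      rcases hs with hs | hs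
      · rw [hM, Finset.mem_filter] at hs; linarith [hs.2]
      · rw [hA, Finset.mem_filter] at hs
        have : 0 ≤ 2 * νmax := by linarith
        linarith [hs.2]
    calc PM + PA = ∑ s ∈ M ∪ A, π s := (Finset.sum_union hdisj).symm
      _ ≤ Pj := Finset.sum_le_sum_of_subset_of_nonneg hsub (fun s _ _ => hπ0 s)
  -- SA drift bound
  set PAE := ∑ s ∈ A.filter (fun s => s ∈ E), π s with hPAE
  set PAN := ∑ s ∈ A.filter (fun s => s ∉ E), π s with hPAN
  have e2 : SA ≤ -(γ * PAE) + δ * PAN := by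
    have hsplit := Finset.sum_filter_add_sum_filter_not A (fun s => s ∈ E)
      (fun s => π s * (∑ s', q s s' * (f s' - f s)))
    rw [hSA, ← hsplit]
    have hb1 : ∑ s ∈ A.filter (fun s => s ∈ E), π s * (∑ s', q s s' * (f s' - f s))
        ≤ ∑ s ∈ A.filter (fun s => s ∈ E), π s * (-γ) := by
      apply Finset.sum_le_sum
      intro s hs
      rw [Finset.mem_filter, hA, Finset.mem_filter] at hs
      have htV : t ≤ V s := hs.1.2
      have hBV : B ≤ V s := le_trans hBt htV
      rw [hfV s htV, herase s]
      exact mul_le_mul_of_nonneg_left (hdrift1 s hBV hs.2) (hπ0 s)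
    have hb2 : ∑ s ∈ A.filter (fun s => ¬ s ∈ E), π s * (∑ s', q s s' * (f s' - f s))
        ≤ ∑ s ∈ A.filter (fun s => ¬ s ∈ E), π s * δ := by
      apply Finset.sum_le_sum
      intro s hs
      rw [Finset.mem_filter, hA, Finset.mem_filter] at hs
      have htV : t ≤ V s := hs.1.2
      have hBV : B ≤ V s := le_trans hBt htV
      rw [hfV s htV, herase s]
      exact mul_le_mul_of_nonneg_left (hdrift2 s hBV hs.2) (hπ0 s)
    have h1 : ∑ s ∈ A.filter (fun s => s ∈ E), π s * (-γ) = -(γ * PAE) := by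
      rw [hPAE, ← Finset.sum_mul]; ring
    have h2 : ∑ s ∈ A.filter (fun s => ¬ s ∈ E), π s * δ = δ * PAN := by
      rw [hPAN, ← Finset.sum_mul]; ring
    linarith
  have e5 : PA = PAE + PAN := by
    rw [hPA, hPAE, hPAN, Finset.sum_filter_add_sum_filter_not]
  have e6 : PAN ≤ PN := by
    apply Finset.sum_le_sum_of_subset_of_nonneg
    · intro s hs
      rw [Finset.mem_filter] at hs
      rw [Finset.mem_filter]
      exact ⟨Finset.mem_univ s, hs.2⟩
    · exact fun s _ _ => hπ0 s
  -- assemble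
  have e1 : SA + SAc = 0 := hflow
  have p1 : D * PM ≤ D * Pj - D * PA := by
    have : D * PM ≤ D * (Pj - PA) := mul_le_mul_of_nonneg_left (by linarith) hD0
    linarith [mul_sub D Pj PA, this]
  have p2 : γ * PA = γ * PAE + γ * PAN := by rw [e5]; ring
  have p3 : γ * PAN ≤ γ * PN := mul_le_mul_of_nonneg_left e6 (le_of_lt hγ)
  have p4 : δ * PAN ≤ δ * PN := mul_le_mul_of_nonneg_left e6 hδ
  have goal' : γ * PA + D * PA ≤ D * Pj + (γ * PN + δ * PN) := by linarith
  calc (γ + D) * PA = γ * PA + D * PA := by ring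
    _ ≤ D * Pj + (γ * PN + δ * PN) := goal'
    _ = D * Pj + (γ + δ) * PN := by ring

/-- **Lemma (conditional tail bound for finite-state CTMCs via Lyapunov drift).**
For an irreducible finite-state CTMC with rate matrix `q` (rows summing to `0`),
stationary distribution `π`, Lyapunov function `V ≥ 0` with drift
`∇V(s) = ∑_{s'≠s} q(s,s') (V(s') - V(s))`, maximum jump `ν_max` and maximum upward rate
`q_max`, if `∇V(s) ≤ -γ` on `{V ≥ B} ∩ E` and `∇V(s) ≤ δ` on `{V ≥ B} \ E`, then
`ℙ(V(S) ≥ B + 2 ν_max j) ≤ α^j + β ℙ(S ∉ E)` with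
`α = q_max ν_max/(q_max ν_max + γ)` and `β = δ/γ + 1`. -/
theorem lem_tail_bound_cond {St : Type*} [Fintype St] [Nonempty St]
    (q : St → St → ℝ)
    (hq0 : ∀ s s', s ≠ s' → 0 ≤ q s s')
    (hqrow : ∀ s, ∑ s', q s s' = 0)
    (hirr : ∀ s s', Relation.ReflTransGen (fun x y => x ≠ y ∧ 0 < q x y) s s')
    (π : St → ℝ) (hπ0 : ∀ s, 0 ≤ π s) (hπ1 : ∑ s, π s = 1)
    (hstat : ∀ s', ∑ s, π s * q s s' = 0)
    (V : St → ℝ) (hV : ∀ s, 0 ≤ V s)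
    (νmax : ℝ)
    (hν : IsGreatest {x : ℝ | ∃ s s', s ≠ s' ∧ 0 < q s s' ∧ x = |V s' - V s|} νmax)
    (qmax : ℝ)
    (hqm : IsGreatest
      {x : ℝ | ∃ s, x = ∑ s' ∈ Finset.univ.filter (fun t => V s < V t), q s s'} qmax)
    (E : Set St) (B γ δ : ℝ) (hB : 0 < B) (hγ : 0 < γ) (hδ : 0 ≤ δ)
    (hdrift1 : ∀ s, B ≤ V s → s ∈ E →
      (∑ s' ∈ Finset.univ.erase s, q s s' * (V s' - V s)) ≤ -γ)
    (hdrift2 : ∀ s, B ≤ V s → s ∉ E →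
      (∑ s' ∈ Finset.univ.erase s, q s s' * (V s' - V s)) ≤ δ) :
    ∀ j : ℕ,
      (∑ s ∈ Finset.univ.filter (fun s => B + 2 * νmax * j ≤ V s), π s)
        ≤ (qmax * νmax / (qmax * νmax + γ)) ^ j
          + (δ / γ + 1) * ∑ s ∈ Finset.univ.filter (fun s => s ∉ E), π s := by
  -- basic positivity facts
  have hν0 : 0 ≤ νmax := by
    obtain ⟨s, s', -, -, h⟩ := hν.1
    rw [h]; positivity
  have hqmax0 : 0 ≤ qmax := by
    obtain ⟨s, h⟩ := hqm.1
    rw [h]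
    apply Finset.sum_nonneg
    intro s' hs'
    rw [Finset.mem_filter] at hs'
    have hne : s ≠ s' := by
      intro h'; rw [← h'] at hs'; exact lt_irrefl _ hs'.2
    exact hq0 s s' hne
  have hjump : ∀ s s', s ≠ s' → 0 < q s s' → |V s' - V s| ≤ νmax :=
    fun s s' h h' => hν.2 ⟨s, s', h, h', rfl⟩
  have hrowb : ∀ s, (∑ s' ∈ Finset.univ.filter (fun t => V s < V t), q s s') ≤ qmax :=
    fun s => hqm.2 ⟨s, rfl⟩
  have hD0 : 0 ≤ qmax * νmax := mul_nonneg hqmax0 hν0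
  have hden : 0 < qmax * νmax + γ := by linarith
  have hPN0 : 0 ≤ ∑ s ∈ Finset.univ.filter (fun s => s ∉ E), π s :=
    Finset.sum_nonneg fun s _ => hπ0 s
  have hβ0 : 0 ≤ δ / γ + 1 := by positivity
  set PN := ∑ s ∈ Finset.univ.filter (fun s => s ∉ E), π s with hPN
  intro j
  induction j with
  | zero =>
    simp only [Nat.cast_zero, mul_zero, add_zero, pow_zero]
    have h1 : (∑ s ∈ Finset.univ.filter (fun s => B ≤ V s), π s) ≤ 1 := by
      rw [← hπ1]
      exact Finset.sum_le_sum_of_subset_of_nonneg (Finset.filter_subset _ _)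
        (fun s _ _ => hπ0 s)
    have h2 : 0 ≤ (δ / γ + 1) * PN := mul_nonneg hβ0 hPN0
    linarith
  | succ j ih =>
    push_cast
    set α := qmax * νmax / (qmax * νmax + γ) with hα
    set t := B + 2 * νmax * ((j : ℝ) + 1) with ht
    have hBt : B ≤ t := by
      have : (0:ℝ) ≤ (j:ℝ) + 1 := by positivity
      nlinarith
    have hstep := step_ineq q hq0 hqrow π hπ0 hstat V νmax hν0 hjump qmax hqmax0 hrowb
      E B γ δ hγ hδ hdrift1 hdrift2 t hBt
    have hteq : t - 2 * νmax = B + 2 * νmax * (j : ℝ) := by rw [ht]; ring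
    rw [hteq] at hstep
    set PA := ∑ s ∈ Finset.univ.filter (fun s => t ≤ V s), π s with hPA
    set Pj := ∑ s ∈ Finset.univ.filter (fun s => B + 2 * νmax * (j : ℝ) ≤ V s), π s with hPj
    have hDPj : qmax * νmax * Pj ≤ qmax * νmax * (α ^ j + (δ / γ + 1) * PN) :=
      mul_le_mul_of_nonneg_left ih hD0
    have hkey : (γ + qmax * νmax) * PA ≤ (γ + qmax * νmax) * (α ^ (j + 1) + (δ / γ + 1) * PN) := by
      have hexp : (γ + qmax * νmax) * (α ^ (j + 1) + (δ / γ + 1) * PN)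
          = qmax * νmax * (α ^ j + (δ / γ + 1) * PN) + (γ + δ) * PN := by
        rw [hα]
        have hden' : qmax * νmax + γ ≠ 0 := hden.ne'
        have hc : (γ + qmax * νmax) * (qmax * νmax / (qmax * νmax + γ)) = qmax * νmax := by
          rw [add_comm γ, mul_div_assoc', mul_div_right_comm, div_self hden', one_mul]
        have hg : γ * (δ / γ) = δ := by field_simp
        rw [pow_succ]
        linear_combination (qmax * νmax / (qmax * νmax + γ)) ^ j * hc + PN * hg
      rw [hexp]
      linarith
    have := (mul_le_mul_iff_of_pos_left (by linarith : (0:ℝ) < γ + qmax * νmax)).mp hkey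
    exact this
end

section
/- Lemma (service rate dominates arrival rate on the peeled region). If nonnegative real numbers x_1, …, x_M satisfy ∑_{m=1}^M x_m ≥ λ + (k − ζ − 6)·Δ and x_m ≥ s*_m − θ_m·Δ for every 1 ≤ m ≤ M, then ∑_{m=1}^M (1 − p_m)·μ_m·x_m ≥ λ + Δ. -/
open Finset

noncomputable section

/-- **Lemma (service rate dominates arrival rate on the peeled region).** -/
theorem lem_service_dominates_arrival (M : ℕ) (hM : 1 ≤ M) (μ p : ℕ → ℝ)
    (hμ : ∀ m ∈ Finset.Icc 1 M, 0 < μ m)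
    (hp0 : ∀ m ∈ Finset.Icc 1 (M - 1), 0 ≤ p m)
    (hp1 : ∀ m ∈ Finset.Icc 1 (M - 1), p m < 1)
    (hpM : p M = 0)
    (hnorm : ∑ m ∈ Finset.Icc 1 M, coxV μ p m = 1)
    (lam Δ : ℝ) (hlam0 : 0 < lam) (hlam1 : lam < 1) (hΔ : 0 < Δ)
    (θ : ℕ → ℝ) (hθ : ∀ m ∈ Finset.Icc 1 M, 0 ≤ θ m)
    (b : ℕ) (hb : 1 ≤ b)
    (wu wl ζ k : ℝ)
    (hwu : wu = (Finset.Icc 1 M).sup' (Finset.nonempty_Icc.mpr hM)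
      (fun m => (1 - p m) * μ m))
    (hwl : wl = (Finset.Icc 1 M).inf' (Finset.nonempty_Icc.mpr hM)
      (fun m => (1 - p m) * μ m))
    (hζ : ζ = 4 * wu * b / wl *
      ((1 / wl - 1 / wu) * (∑ m ∈ Finset.Icc 1 M, θ m * ((1 - p m) * μ m))
        + 1 / wl + 6))
    (hk : k = (∑ m ∈ Finset.Icc 1 M, θ m * ((1 - p m) * μ m)) / wu
      + (1 + wl / (4 * wu * b)) * ζ - ∑ m ∈ Finset.Icc 1 M, θ m)
    (x : ℕ → ℝ) (hx0 : ∀ m ∈ Finset.Icc 1 M, 0 ≤ x m)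
    (hsum : (∑ m ∈ Finset.Icc 1 M, x m) ≥ lam + (k - ζ - 6) * Δ)
    (hxm : ∀ m ∈ Finset.Icc 1 M, x m ≥ lam * coxV μ p m - θ m * Δ) :
    (∑ m ∈ Finset.Icc 1 M, (1 - p m) * μ m * x m) ≥ lam + Δ := by
  have hne : (Finset.Icc 1 M).Nonempty := Finset.nonempty_Icc.mpr hM
  have hw : ∀ m ∈ Finset.Icc 1 M, 0 < (1 - p m) * μ m := by
    intro m hm
    simp only [Finset.mem_Icc] at hm
    have hμm := hμ m (by simp [Finset.mem_Icc]; omega)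
    rcases eq_or_lt_of_le hm.2 with h | h
    · rw [h, hpM]; simpa using hμ M (by simp [Finset.mem_Icc, hM])
    · have hm' : m ∈ Finset.Icc 1 (M - 1) := by simp [Finset.mem_Icc]; omega
      have := hp1 m hm'
      nlinarith
  have hwl_le : ∀ m ∈ Finset.Icc 1 M, wl ≤ (1 - p m) * μ m := by
    intro m hm; rw [hwl]; exact Finset.inf'_le (fun m => (1 - p m) * μ m) hm
  have hle_wu : ∀ m ∈ Finset.Icc 1 M, (1 - p m) * μ m ≤ wu := by
    intro m hm; rw [hwu]; exact Finset.le_sup' (fun m => (1 - p m) * μ m) hm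
  have hwl_pos : 0 < wl := by
    obtain ⟨m, hm, hmeq⟩ := Finset.exists_mem_eq_inf' hne (fun m => (1 - p m) * μ m)
    rw [hwl, hmeq]; exact hw m hm
  have hwu_pos : 0 < wu := by
    obtain ⟨m, hm⟩ := hne
    exact lt_of_lt_of_le hwl_pos (le_trans (hwl_le m hm) (hle_wu m hm))
  have hb' : (0:ℝ) < (b:ℝ) := by exact_mod_cast Nat.lt_of_lt_of_le Nat.zero_lt_one hb
  -- telescoping sum : ∑ w_m v_m = 1
  have hwv : ∑ m ∈ Finset.Icc 1 M, (1 - p m) * μ m * coxV μ p m = 1 := by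
    have key : ∀ m ∈ Finset.Icc 1 M, (1 - p m) * μ m * coxV μ p m
        = (∏ i ∈ Finset.Icc 1 (m - 1), p i) - ∏ i ∈ Finset.Icc 1 m, p i := by
      intro m hm
      simp only [Finset.mem_Icc] at hm
      have hμm := (hμ m (by simp [Finset.mem_Icc]; omega)).ne'
      have hm1 : m - 1 + 1 = m := by omega
      have hsplit : ∏ i ∈ Finset.Icc 1 m, p i
          = (∏ i ∈ Finset.Icc 1 (m - 1), p i) * p m := by
        conv_lhs => rw [← hm1]
        rw [Finset.prod_Icc_succ_top (by omega), hm1]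
      rw [coxV, hsplit]
      field_simp
    rw [Finset.sum_congr rfl key]
    have hre : ∑ m ∈ Finset.Icc 1 M,
        ((∏ i ∈ Finset.Icc 1 (m - 1), p i) - ∏ i ∈ Finset.Icc 1 m, p i)
        = ∑ i ∈ Finset.range M,
          ((∏ j ∈ Finset.Icc 1 i, p j) - ∏ j ∈ Finset.Icc 1 (i + 1), p j) := by
      rw [← Finset.Ico_add_one_right_eq_Icc, Finset.sum_Ico_eq_sum_range]
      refine Finset.sum_congr (by congr 1) (fun i _ => ?_)
      rw [show 1 + i - 1 = i from by omega, show 1 + i = i + 1 from by omega]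
    rw [hre, Finset.sum_range_sub' (fun i => ∏ j ∈ Finset.Icc 1 i, p j) M]
    have h0 : ∏ j ∈ Finset.Icc 1 0, p j = 1 := by simp
    have hMz : ∏ j ∈ Finset.Icc 1 M, p j = 0 :=
      Finset.prod_eq_zero (Finset.mem_Icc.mpr ⟨hM, le_refl M⟩) hpM
    rw [h0, hMz]; ring
  -- pointwise lower bound
  have key : ∀ m ∈ Finset.Icc 1 M,
      wl * (x m - (lam * coxV μ p m - θ m * Δ))
        + (1 - p m) * μ m * (lam * coxV μ p m - θ m * Δ)
      ≤ (1 - p m) * μ m * x m := by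
    intro m hm
    have h1 := hxm m hm
    have h2 := hwl_le m hm
    nlinarith [hw m hm]
  have hsum2 := Finset.sum_le_sum key
  have expand : ∑ m ∈ Finset.Icc 1 M,
      (wl * (x m - (lam * coxV μ p m - θ m * Δ))
        + (1 - p m) * μ m * (lam * coxV μ p m - θ m * Δ))
      = wl * (∑ m ∈ Finset.Icc 1 M, x m)
        - wl * lam * (∑ m ∈ Finset.Icc 1 M, coxV μ p m)
        + wl * Δ * (∑ m ∈ Finset.Icc 1 M, θ m)
        + lam * (∑ m ∈ Finset.Icc 1 M, (1 - p m) * μ m * coxV μ p m)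
        - Δ * (∑ m ∈ Finset.Icc 1 M, θ m * ((1 - p m) * μ m)) := by
    simp only [Finset.mul_sum, ← Finset.sum_add_distrib, ← Finset.sum_sub_distrib]
    exact Finset.sum_congr rfl fun m _ => by ring
  rw [hnorm, hwv] at expand
  have hident : wl * (k - ζ - 6 + ∑ m ∈ Finset.Icc 1 M, θ m)
      = (∑ m ∈ Finset.Icc 1 M, θ m * ((1 - p m) * μ m)) + 1 := by
    rw [hk, hζ]
    field_simp
    ring
  have hX : wl * (∑ m ∈ Finset.Icc 1 M, x m) ≥ wl * (lam + (k - ζ - 6) * Δ) :=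
    mul_le_mul_of_nonneg_left hsum hwl_pos.le
  nlinarith [hsum2, expand, hident, hX, hΔ]
end
end

section
/- Lemma (closed form for 1 − ξ). Let M ≥ 2 be an integer, μ_m > 0 for 1 ≤ m ≤ M, p_m ≥ 0 for 1 ≤ m ≤ M−1 (with p_M = 0), v_m = (∏_{i=1}^{m−1} p_i)/μ_m, and assume ∑_{m=1}^M v_m = 1. Then 1 − ∑_{m=2}^M b_m·∏_{j=m+1}^M a_j = μ_1·∏_{m=2}^M a_m; that is, 1 − ξ = μ_1·∏_{m=2}^M a_m. -/
open Finset

noncomputable section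

lemma tel_aux (a : ℕ → ℝ) : ∀ M : ℕ,
    ∑ m ∈ Icc 2 M, (1 - a m) * ∏ j ∈ Icc (m+1) M, a j
      = 1 - ∏ j ∈ Icc 2 M, a j := by
  intro M
  induction M with
  | zero => simp
  | succ M ih =>
    rcases Nat.lt_or_ge M 1 with h | h
    · interval_cases M <;> simp
    · rw [Finset.sum_Icc_succ_top (by omega : 2 ≤ M + 1),
          Finset.prod_Icc_succ_top (by omega : 2 ≤ M + 1)]
      have hsum : ∑ m ∈ Icc 2 M, (1 - a m) * ∏ j ∈ Icc (m+1) (M+1), a j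
          = (∑ m ∈ Icc 2 M, (1 - a m) * ∏ j ∈ Icc (m+1) M, a j) * a (M+1) := by
        rw [Finset.sum_mul]
        refine Finset.sum_congr rfl fun m hm => ?_
        rw [Finset.prod_Icc_succ_top (by have := (Finset.mem_Icc.mp hm).2; omega)]
        ring
      have he : Icc (M+1+1) (M+1) = (∅ : Finset ℕ) := by
        rw [Finset.Icc_eq_empty]; omega
      rw [hsum, ih, he]
      simp; ring

lemma xi_main (a w : ℕ → ℝ) (hw : w 1 = 1) : ∀ M : ℕ, 1 ≤ M →
    1 - (∑ m ∈ Icc 2 M, ((1 - a m) * (1 + ∑ r ∈ Icc (m+1) M, w r) - a m * w m)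
          * ∏ j ∈ Icc (m+1) M, a j)
      = (∏ j ∈ Icc 2 M, a j) * ∑ m ∈ Icc 1 M, w m := by
  intro M hM
  induction M, hM using Nat.le_induction with
  | base => simp [hw]
  | succ M hM ih =>
    have he : Icc (M+1+1) (M+1) = (∅ : Finset ℕ) := by
      rw [Finset.Icc_eq_empty]; omega
    rw [Finset.sum_Icc_succ_top (by omega : 2 ≤ M + 1),
        Finset.prod_Icc_succ_top (by omega : 2 ≤ M + 1),
        Finset.sum_Icc_succ_top (by omega : 1 ≤ M + 1)]
    have hsum : ∑ m ∈ Icc 2 M, ((1 - a m) * (1 + ∑ r ∈ Icc (m+1) (M+1), w r) - a m * w m)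
          * ∏ j ∈ Icc (m+1) (M+1), a j
        = a (M+1) * (∑ m ∈ Icc 2 M, ((1 - a m) * (1 + ∑ r ∈ Icc (m+1) M, w r) - a m * w m)
              * ∏ j ∈ Icc (m+1) M, a j)
          + (a (M+1) * w (M+1)) * ∑ m ∈ Icc 2 M, (1 - a m) * ∏ j ∈ Icc (m+1) M, a j := by
      rw [Finset.mul_sum, Finset.mul_sum, ← Finset.sum_add_distrib]
      refine Finset.sum_congr rfl fun m hm => ?_
      have hm2 := (Finset.mem_Icc.mp hm).2
      rw [Finset.sum_Icc_succ_top (by omega : m + 1 ≤ M + 1),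
          Finset.prod_Icc_succ_top (by omega : m + 1 ≤ M + 1)]
      ring
    rw [hsum, tel_aux, he]
    simp only [Finset.sum_empty, Finset.prod_empty]
    linear_combination a (M+1) * ih


/-- **Lemma (closed form for `1 - ξ`).** `1 - ξ = μ_1 ∏_{m=2}^M a_m`. -/
theorem lem_one_sub_xi (M : ℕ) (hM : 2 ≤ M) (μ p : ℕ → ℝ)
    (hμ : ∀ m ∈ Finset.Icc 1 M, 0 < μ m)
    (hp0 : ∀ m ∈ Finset.Icc 1 (M - 1), 0 ≤ p m)
    (hpM : p M = 0)
    (hnorm : ∑ m ∈ Finset.Icc 1 M, coxV μ p m = 1) :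
    1 - coxXi M μ p = μ 1 * ∏ m ∈ Finset.Icc 2 M, coxA μ p m := by
  have hμ1 : (0:ℝ) < μ 1 := hμ 1 (Finset.mem_Icc.mpr ⟨le_refl 1, by omega⟩)
  have hv1 : coxV μ p 1 = 1 / μ 1 := by
    simp [coxV]
  have hv1ne : coxV μ p 1 ≠ 0 := by
    rw [hv1]; positivity
  set w : ℕ → ℝ := fun m => coxV μ p m / coxV μ p 1 with hwdef
  have hw1 : w 1 = 1 := div_self hv1ne
  have key := xi_main (coxA μ p) w hw1 M (by omega)
  have hxi : coxXi M μ p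
      = ∑ m ∈ Icc 2 M, ((1 - coxA μ p m) * (1 + ∑ r ∈ Icc (m+1) M, w r)
          - coxA μ p m * w m) * ∏ j ∈ Icc (m+1) M, coxA μ p j := by
    unfold coxXi coxB
    refine Finset.sum_congr rfl fun m hm => ?_
    simp only [hwdef]
    ring
  have hsw : ∑ m ∈ Icc 1 M, w m = μ 1 := by
    simp only [hwdef]
    rw [← Finset.sum_div, hnorm, hv1]
    field_simp
  rw [hxi, key, hsw]
  ring
end
end
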